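/- arXiv:1701.04441 — 6 statements merged into one kernel-verified Lean document; each statement's English description precedes it below -/
import Mathlib

section
/- If two groups G₁ and G₂ are elementarily equivalent (their first-order theories in the language of groups coincide), then G₁ possesses the Magnus property if and only if G₂ possesses it. -/
open FirstOrder

/-- The first-order language of groups: a constant `1`, a unary function `⁻¹`
and a binary function `*`, and no relation symbols. -/
def groupLanguage : Language where
  Functions := fun n =>
    match n with
    | 0 => Unit
    | 1 => Unit
    | 2 => Unit
    | _ => Empty
  Relations := fun _ => Empty

/-- The canonical `groupLanguage`-structure on a group. -/
def groupStructure (G : Type*) [Group G] : groupLanguage.Structure G where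
  funMap {n} f args :=
    match n, f, args with
    | 0, _, _ => (1 : G)
    | 1, _, a => (a 0)⁻¹
    | 2, _, a => a 0 * a 1
    | (_ + 3), f, _ => f.elim
  RelMap {n} r := r.elim

/-- A group `G` has the Magnus property if any two elements with the same normal closure
are conjugate up to inversion. -/
def MagnusProperty (G : Type*) [Group G] : Prop :=
  ∀ u v : G, Subgroup.normalClosure {u} = Subgroup.normalClosure {v} →
    IsConj u v ∨ IsConj u v⁻¹

/-! `u` lies in the normal closure of `v` iff `u = ∏ᵢ gᵢ v^{±1} gᵢ⁻¹` for some finite family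
`(gᵢ)` and signs. Hence "`u` and `v` have the same normal closure" is a disjunction of existential
formulas indexed by the lengths and sign sequences of two such products, and the Magnus property is
the conjunction of the universal sentences obtained by fixing these data: for all `u, v, gᵢ, hⱼ`,
if `u = ∏ gᵢ v^{±1} gᵢ⁻¹` and `v = ∏ hⱼ u^{±1} hⱼ⁻¹` then `u` is conjugate to `v` or `v⁻¹`.
Elementarily equivalent groups satisfy the same such sentences. -/

lemma Subgroup.normalClosure_singleton_eq_iff {G : Type*} [Group G] {u v : G} :
    normalClosure {u} = normalClosure {v} ↔ u ∈ normalClosure {v} ∧ v ∈ normalClosure {u} := by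
  simp only [le_antisymm_iff, ← normalClosure_subset_iff, Set.singleton_subset_iff, SetLike.mem_coe]

section conjProd

variable {M G : Type*} {n m : ℕ}

def conjProd [Mul M] [One M] [Inv M] (v : M) (s : Fin n → Bool) (g : Fin n → M) : M :=
  (List.ofFn fun i => g i * (if s i then v else v⁻¹) * (g i)⁻¹).prod

variable [Group G]

lemma conjProd_fin_one (v c : G) (b : Bool) :
    conjProd v ![b] ![c] = c * (if b then v else v⁻¹) * c⁻¹ := by
  simp [conjProd]

lemma conjProd_mul_conjProd (v : G) (s₁ : Fin n → Bool) (g₁ : Fin n → G)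
    (s₂ : Fin m → Bool) (g₂ : Fin m → G) :
    conjProd v s₁ g₁ * conjProd v s₂ g₂ = conjProd v (Fin.append s₁ s₂) (Fin.append g₁ g₂) := by
  simp [conjProd, List.ofFn_add]

lemma conjProd_mem_normalClosure (v : G) (s : Fin n → Bool) (g : Fin n → G) :
    conjProd v s g ∈ Subgroup.normalClosure {v} := by
  have hv : v ∈ Subgroup.normalClosure {v} := Subgroup.subset_normalClosure rfl
  refine Subgroup.list_prod_mem _ fun x hx => ?_
  obtain ⟨i, rfl⟩ := List.mem_ofFn.1 hx
  refine Subgroup.normalClosure_normal.conj_mem _ ?_ (g i)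
  split_ifs
  exacts [hv, inv_mem hv]

lemma mem_normalClosure_singleton_iff {u v : G} :
    u ∈ Subgroup.normalClosure {v} ↔
      ∃ (n : ℕ) (s : Fin n → Bool) (g : Fin n → G), u = conjProd v s g := by
  refine ⟨fun hu => ?_, fun ⟨n, s, g, hu⟩ => hu ▸ conjProd_mem_normalClosure v s g⟩
  induction hu using Subgroup.closure_induction'' with
  | mem x hx =>
    obtain ⟨_, rfl, hc⟩ := Group.mem_conjugatesOfSet_iff.1 hx
    obtain ⟨c, rfl⟩ := isConj_iff.1 hc
    exact ⟨1, ![true], ![c], by simp [conjProd_fin_one]⟩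
  | inv_mem x hx =>
    obtain ⟨_, rfl, hc⟩ := Group.mem_conjugatesOfSet_iff.1 hx
    obtain ⟨c, rfl⟩ := isConj_iff.1 hc
    exact ⟨1, ![false], ![c], by simp [conjProd_fin_one, mul_assoc]⟩
  | one => exact ⟨0, ![], ![], rfl⟩
  | mul x y _ _ hx hy =>
    obtain ⟨n₁, s₁, g₁, rfl⟩ := hx
    obtain ⟨n₂, s₂, g₂, rfl⟩ := hy
    exact ⟨_, _, _, conjProd_mul_conjProd v s₁ g₁ s₂ g₂⟩

end conjProd

open FirstOrder Language

attribute [local instance] groupStructure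

namespace groupLanguage

variable {α : Type*}

instance : One (groupLanguage.Term α) := ⟨Term.func (l := 0) () Fin.elim0⟩

instance : Inv (groupLanguage.Term α) := ⟨fun t => Term.func (l := 1) () ![t]⟩

instance : Mul (groupLanguage.Term α) := ⟨fun t₁ t₂ => Term.func (l := 2) () ![t₁, t₂]⟩

section realize

variable {G : Type*} [Group G] (xs : α → G) (t t₁ t₂ : groupLanguage.Term α)

@[simp] lemma realize_inv : t⁻¹.realize xs = (t.realize xs)⁻¹ := rfl

@[simp] lemma realize_mul : (t₁ * t₂).realize xs = t₁.realize xs * t₂.realize xs := rfl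

lemma realize_list_prod (l : List (groupLanguage.Term α)) :
    l.prod.realize xs = (l.map (Term.realize xs)).prod := by
  induction l with
  | nil => rfl
  | cons t l ih => simp [ih]

@[simp] lemma realize_conjProd {n : ℕ} (s : Fin n → Bool) (g : Fin n → groupLanguage.Term α) :
    (conjProd t s g).realize xs = conjProd (t.realize xs) s fun i => (g i).realize xs := by
  simp only [conjProd, realize_list_prod, List.map_ofFn]
  refine congrArg List.prod (congrArg List.ofFn (funext fun i => ?_))
  dsimp only [Function.comp_apply]
  split <;> rfl

end realize

def isConjFormula (t₁ t₂ : groupLanguage.Term α) : groupLanguage.Formula α :=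
  ∃' ((&0 * t₁.relabel Sum.inl * (&0)⁻¹) =' t₂.relabel Sum.inl)

@[simp] lemma realize_isConjFormula {G : Type*} [Group G] (xs : α → G)
    (t₁ t₂ : groupLanguage.Term α) :
    (isConjFormula t₁ t₂).Realize xs ↔ IsConj (t₁.realize xs) (t₂.realize xs) := by
  simp only [isConjFormula, Formula.Realize, BoundedFormula.realize_ex,
    BoundedFormula.realize_bdEqual, realize_mul, realize_inv, Term.realize_relabel,
    Sum.elim_comp_inl, isConj_iff]
  rfl

section magnusSentence

variable {α G : Type*} [Group G] {n m : ℕ}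

def magnusFormula (s : Fin n → Bool) (t : Fin m → Bool) (u v : groupLanguage.Term α)
    (g : Fin n → groupLanguage.Term α) (h : Fin m → groupLanguage.Term α) :
    groupLanguage.Formula α :=
  (u.equal (conjProd v s g) ⊓ v.equal (conjProd u t h)) ⟹
    (isConjFormula u v ⊔ isConjFormula u v⁻¹)

@[simp] lemma realize_magnusFormula (xs : α → G) (s : Fin n → Bool) (t : Fin m → Bool)
    (u v : groupLanguage.Term α) (g : Fin n → groupLanguage.Term α)
    (h : Fin m → groupLanguage.Term α) :
    (magnusFormula s t u v g h).Realize xs ↔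
      (u.realize xs = conjProd (v.realize xs) s (fun i => (g i).realize xs) ∧
        v.realize xs = conjProd (u.realize xs) t (fun j => (h j).realize xs) →
        IsConj (u.realize xs) (v.realize xs) ∨ IsConj (u.realize xs) (v.realize xs)⁻¹) := by
  simp [magnusFormula]

noncomputable def magnusSentence (s : Fin n → Bool) (t : Fin m → Bool) :
    groupLanguage.Sentence :=
  Formula.iAlls (Fin 2 ⊕ Fin n ⊕ Fin m) <|
    magnusFormula s t (var (.inr (.inl 0))) (var (.inr (.inl 1)))
      (fun i => var (.inr (.inr (.inl i)))) (fun j => var (.inr (.inr (.inr j))))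

lemma realize_magnusSentence (s : Fin n → Bool) (t : Fin m → Bool) :
    G ⊨ magnusSentence s t ↔
      ∀ (u v : G) (g : Fin n → G) (h : Fin m → G),
        u = conjProd v s g ∧ v = conjProd u t h → IsConj u v ∨ IsConj u v⁻¹ := by
  simp only [magnusSentence, Sentence.Realize, Formula.realize_iAlls, realize_magnusFormula,
    Term.realize_var, Sum.elim_inr]
  exact ⟨fun H u v g h => H (Sum.elim ![u, v] (Sum.elim g h)), fun H xs => H _ _ _ _⟩

end magnusSentence

end groupLanguage

open groupLanguage in
theorem magnusProperty_iff_forall_realize_magnusSentence (G : Type*) [Group G] :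
    MagnusProperty G ↔
      ∀ (n m : ℕ) (s : Fin n → Bool) (t : Fin m → Bool), G ⊨ magnusSentence s t := by
  simp only [MagnusProperty, Subgroup.normalClosure_singleton_eq_iff,
    mem_normalClosure_singleton_iff, realize_magnusSentence]
  constructor
  · intro H n m s t u v g h hu
    exact H u v ⟨⟨n, s, g, hu.1⟩, ⟨m, t, h, hu.2⟩⟩
  · rintro H u v ⟨⟨n, s, g, hu⟩, m, t, h, hv⟩
    exact H n m s t u v g h ⟨hu, hv⟩

/-- If two groups are elementarily equivalent (in the language of groups), then one has the
Magnus property if and only if the other does. -/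
theorem magnusProperty_iff_of_elementarilyEquivalent
    (G₁ G₂ : Type*) [Group G₁] [Group G₂] :
    letI := groupStructure G₁
    letI := groupStructure G₂
    G₁ ≅[groupLanguage] G₂ → (MagnusProperty G₁ ↔ MagnusProperty G₂) := by
  intro h
  simp only [magnusProperty_iff_forall_realize_magnusSentence, h.realize_sentence]
end

section
/- The kernel N of the homomorphism φ: H → ℤ sending x to 1 and b, y₁, …, yₙ to 0, where H = ⟨x, b, y₁, …, yₙ | [xᵏ,b]u⟩ with k, n ≥ 1 and u a non-trivial reduced word in y₁, …, yₙ, is a free group; moreover, for every i ∈ ℤ, the set B(i) = {b_i, b_{i+1}, …, b_{i+k-1}} ∪ {y_{m,j} : 1 ≤ m ≤ n, j ∈ ℤ} is a free basis of N, where g_j denotes x⁻ʲgxʲ. -/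
/-! Common setup: the one-relator group `H = ⟨x, b, y₁, …, yₙ | [xᵏ,b]u⟩`, where generators are
indexed by `Bool ⊕ Fin n` (`Sum.inl true ↦ x`, `Sum.inl false ↦ b`, `Sum.inr m ↦ yₘ`),
`[xᵏ,b] = x⁻ᵏb⁻¹xᵏb`, and `u` is the image of a word `u'` in the letters `y₁, …, yₙ`. -/

/-- The single relator `[xᵏ,b]u` of `H`. -/
def relOfH (k n : ℕ) (u' : FreeGroup (Fin n)) : Set (FreeGroup (Bool ⊕ Fin n)) :=
  {((FreeGroup.of (Sum.inl true))⁻¹) ^ k * (FreeGroup.of (Sum.inl false))⁻¹ *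
    (FreeGroup.of (Sum.inl true)) ^ k * FreeGroup.of (Sum.inl false) *
    FreeGroup.map Sum.inr u'}

/-- The one-relator group `H = ⟨x, b, y₁, …, yₙ | [xᵏ,b]u⟩`. -/
abbrev Hgp (k n : ℕ) (u' : FreeGroup (Fin n)) : Type :=
  PresentedGroup (relOfH k n u')

/-- The generator `x` of `H`. -/
def xg (k n : ℕ) (u' : FreeGroup (Fin n)) : Hgp k n u' := PresentedGroup.of (Sum.inl true)

/-- The generator `b` of `H`. -/
def bg (k n : ℕ) (u' : FreeGroup (Fin n)) : Hgp k n u' := PresentedGroup.of (Sum.inl false)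

/-- The generator `yₘ` of `H`. -/
def yg (k n : ℕ) (u' : FreeGroup (Fin n)) (m : Fin n) : Hgp k n u' :=
  PresentedGroup.of (Sum.inr m)

/-- For `g ∈ H` and `i ∈ ℤ`, the element `g_i := x⁻ⁱ g xⁱ`. -/
def cj (k n : ℕ) (u' : FreeGroup (Fin n)) (i : ℤ) (g : Hgp k n u') : Hgp k n u' :=
  xg k n u' ^ (-i) * g * xg k n u' ^ i

/-- The element `b_i = x⁻ⁱ b xⁱ`. -/
def bi (k n : ℕ) (u' : FreeGroup (Fin n)) (i : ℤ) : Hgp k n u' := cj k n u' i (bg k n u')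

/-- The element `y_{m,i} = x⁻ⁱ yₘ xⁱ`. -/
def yi (k n : ℕ) (u' : FreeGroup (Fin n)) (m : Fin n) (i : ℤ) : Hgp k n u' :=
  cj k n u' i (yg k n u' m)

/-- The element `u_i = x⁻ⁱ u xⁱ`, where `u` is the image of `u'` in `H`. -/
def ui (k n : ℕ) (u' : FreeGroup (Fin n)) (i : ℤ) : Hgp k n u' :=
  cj k n u' i (FreeGroup.lift (yg k n u') u')

/-- The subgroup `G_{i,∞} = ⟨G_l : l ≥ i⟩` of `H`, generated by all `b_j`, `y_{m,j}` with
`j ≥ i`. -/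
def Gge (k n : ℕ) (u' : FreeGroup (Fin n)) (i : ℤ) : Subgroup (Hgp k n u') :=
  Subgroup.closure
    ({g | ∃ j, i ≤ j ∧ g = bi k n u' j} ∪ {g | ∃ m j, i ≤ j ∧ g = yi k n u' m j})

/-- The subgroup `G_{−∞,i} = ⟨G_l : l ≤ i⟩` of `H`, generated by all `b_j`, `y_{m,j}` with
`j ≤ i`. -/
def Gle (k n : ℕ) (u' : FreeGroup (Fin n)) (i : ℤ) : Subgroup (Hgp k n u') :=
  Subgroup.closure
    ({g | ∃ j, j ≤ i ∧ g = bi k n u' j} ∪ {g | ∃ m j, j ≤ i ∧ g = yi k n u' m j})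

/-- `a` is the α-limit of `r`: the largest index `i` with `r ∈ G_{i,∞}`. -/
def IsAlphaLimit (k n : ℕ) (u' : FreeGroup (Fin n)) (r : Hgp k n u') (a : ℤ) : Prop :=
  r ∈ Gge k n u' a ∧ ∀ i, r ∈ Gge k n u' i → i ≤ a

/-- `w` is the ω-limit of `r`: the smallest index `i` with `r ∈ G_{−∞,i}`. -/
def IsOmegaLimit (k n : ℕ) (u' : FreeGroup (Fin n)) (r : Hgp k n u') (w : ℤ) : Prop :=
  r ∈ Gle k n u' w ∧ ∀ i, r ∈ Gle k n u' i → w ≤ i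

/-- The property that `φ : H →* Multiplicative ℤ` is the exponent-sum-in-`x` homomorphism. -/
def IsExpSum (k n : ℕ) (u' : FreeGroup (Fin n))
    (φ : Hgp k n u' →* Multiplicative ℤ) : Prop :=
  φ (xg k n u') = Multiplicative.ofAdd 1 ∧ φ (bg k n u') = 1 ∧ ∀ m, φ (yg k n u' m) = 1

/-- The normal closure, in the subgroup `N ≤ H`, of a subset `S ⊆ N`, viewed as a subgroup
of `H`: the subgroup generated by all `N`-conjugates of elements of `S`. -/
def nclIn (k n : ℕ) (u' : FreeGroup (Fin n)) (N : Subgroup (Hgp k n u'))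
    (S : Set (Hgp k n u')) : Subgroup (Hgp k n u') :=
  Subgroup.closure {h | ∃ g ∈ N, ∃ t ∈ S, h = g * t * g⁻¹}

/-- A reduced word is *cyclically reduced* if its first letter is not the inverse of its
last letter. -/
def IsCyclicallyReducedWord {X : Type*} (w : List (X × Bool)) : Prop :=
  ∀ a b : X × Bool, w.head? = some a → w.getLast? = some b → ¬(a.1 = b.1 ∧ a.2 = !b.2)

/-!
Write the paper's `k` as `k + 1`. Let `F` be free on `b₀, …, b_k` and `y_{m,j}` (`j ∈ ℤ`), and
let `σ` be its automorphism `b_t ↦ b_{t+1}` (`t < k`), `b_k ↦ b₀u₀`, `y_{m,j} ↦ y_{m,j+1}`,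
where `u_j` is `u` written in the letters `y_{m,j}`. Then `σ^{k+1} b₀ = b₀u₀` is exactly the
defining relation read as `x^{-(k+1)} b x^{k+1} = b u`. Hence `x ↦ inr 1`, `b ↦ b₀`,
`yₘ ↦ y_{m,0}` is an isomorphism `H ≃ F ⋊ ℤ`, with inverse sending `b_t`, `y_{m,j}` to the
elements of the same name in `H`. Under it `N` is `F`, so `B(0)` is a free basis of `N`,
and conjugation by `x^{-i}` carries `B(0)` onto `B(i)`.
-/

open SemidirectProduct Multiplicative
open FreeGroup (of)

section AutomorphismPowers

variable {G H : Type*} [Group G] [Group H]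

theorem MulAut.zpow_apply_of_apply_eq (a : MulAut G) (v : ℤ → G)
    (hv : ∀ l, a (v l) = v (l + 1)) (j l : ℤ) : (a ^ j) (v l) = v (l + j) := by
  induction j using Int.induction_on generalizing l with
  | zero => simp
  | succ j ih =>
    rw [zpow_add_one, MulAut.mul_apply, hv, ih]
    ring_nf
  | pred j ih =>
    have hv' : a⁻¹ (v l) = v (l - 1) := by
      rw [MulAut.inv_apply, MulEquiv.symm_apply_eq, hv, sub_add_cancel]
    rw [zpow_sub_one, MulAut.mul_apply, hv', ih]
    ring_nf

theorem MonoidHom.map_zpow_apply_of_map_apply (f : G →* H) (a : MulAut G) (b : MulAut H)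
    (h : ∀ v, f (a v) = b (f v)) (j : ℤ) (v : G) : f ((a ^ j) v) = (b ^ j) (f v) := by
  induction j using Int.induction_on generalizing v with
  | zero => simp
  | succ j ih => rw [zpow_add_one, zpow_add_one, MulAut.mul_apply, MulAut.mul_apply, ih, h]
  | pred j ih =>
    have h' : ∀ v, f (a⁻¹ v) = b⁻¹ (f v) := fun v => by
      rw [MulAut.inv_apply, MulAut.inv_apply, MulEquiv.eq_symm_apply, ← h,
        MulEquiv.apply_symm_apply]
    rw [zpow_sub_one, zpow_sub_one, MulAut.mul_apply, MulAut.mul_apply, ih, h']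

end AutomorphismPowers

theorem FreeGroup.lift_map_apply {α β G : Type*} [Group G] (f : β → G) (g : α → β)
    (x : FreeGroup α) : FreeGroup.lift f (FreeGroup.map g x) = FreeGroup.lift (f ∘ g) x :=
  DFunLike.congr_fun (FreeGroup.ext_hom ((FreeGroup.lift f).comp (FreeGroup.map g))
    (FreeGroup.lift (f ∘ g)) fun _ => by simp) x

theorem Fin.add_one_ne_zero_of_ne_last {k : ℕ} {t : Fin (k + 1)} (ht : t ≠ Fin.last k) :
    t + 1 ≠ 0 := by
  rwa [Ne, ← Fin.last_add_one, add_left_inj]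

theorem Fin.sub_one_ne_last_of_ne_zero {k : ℕ} {t : Fin (k + 1)} (ht : t ≠ 0) :
    t - 1 ≠ Fin.last k := by
  rwa [Ne, sub_eq_iff_eq_add, Fin.last_add_one]

namespace SemidirectProduct

variable {N K G : Type*} [Group N] [Group K] [Group G] {φ : K →* MulAut N}

def kerEquivOfMulEquiv (e : G ≃* N ⋊[φ] K) (ψ : G →* K) (hψ : ∀ g, ψ g = rightHom (e g)) :
    ψ.ker ≃* N where
  toFun g := (e g).left
  invFun v := ⟨e.symm (inl v), by simp [hψ]⟩
  left_inv g := by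
    have hg : (e g).right = 1 := by rw [← rightHom_eq_right, ← hψ]; exact g.2
    ext
    rw [e.symm_apply_eq]
    ext <;> simp [hg]
  right_inv v := by simp
  map_mul' g g' := by
    have hg : (e g).right = 1 := by rw [← rightHom_eq_right, ← hψ]; exact g.2
    simp [hg]

end SemidirectProduct

namespace ShiftExtension

variable {α : Type*} (k : ℕ) (w : FreeGroup α)

def wordAt (j : ℤ) : FreeGroup (Fin (k + 1) ⊕ α × ℤ) := FreeGroup.map (fun a => .inr (a, j)) w

def shiftGen : Fin (k + 1) ⊕ α × ℤ → FreeGroup (Fin (k + 1) ⊕ α × ℤ)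
  | .inl t => if t = Fin.last k then of (.inl 0) * wordAt k w 0 else of (.inl (t + 1))
  | .inr (a, j) => of (.inr (a, j + 1))

def unshiftGen : Fin (k + 1) ⊕ α × ℤ → FreeGroup (Fin (k + 1) ⊕ α × ℤ)
  | .inl t => if t = 0 then of (.inl (Fin.last k)) * (wordAt k w (-1))⁻¹ else of (.inl (t - 1))
  | .inr (a, j) => of (.inr (a, j - 1))

theorem lift_shiftGen_wordAt (j : ℤ) :
    FreeGroup.lift (shiftGen k w) (wordAt k w j) = wordAt k w (j + 1) := by
  rw [wordAt, wordAt, FreeGroup.lift_map_apply, FreeGroup.map_eq_lift]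
  rfl

theorem lift_unshiftGen_wordAt (j : ℤ) :
    FreeGroup.lift (unshiftGen k w) (wordAt k w j) = wordAt k w (j - 1) := by
  rw [wordAt, wordAt, FreeGroup.lift_map_apply, FreeGroup.map_eq_lift]
  rfl

def shift : MulAut (FreeGroup (Fin (k + 1) ⊕ α × ℤ)) :=
  MonoidHom.toMulEquiv (FreeGroup.lift (shiftGen k w)) (FreeGroup.lift (unshiftGen k w))
    (FreeGroup.ext_hom _ _ <| by
      rintro (t | ⟨a, j⟩)
      · by_cases ht : t = Fin.last k
        · simp [ht, shiftGen, unshiftGen, lift_unshiftGen_wordAt]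
        · simp [ht, shiftGen, unshiftGen, Fin.add_one_ne_zero_of_ne_last]
      · simp [shiftGen, unshiftGen])
    (FreeGroup.ext_hom _ _ <| by
      rintro (t | ⟨a, j⟩)
      · by_cases ht : t = 0
        · simp [ht, shiftGen, unshiftGen, lift_shiftGen_wordAt]
        · simp [ht, shiftGen, unshiftGen, Fin.sub_one_ne_last_of_ne_zero]
      · simp [shiftGen, unshiftGen])

theorem shift_of (g : Fin (k + 1) ⊕ α × ℤ) : shift k w (of g) = shiftGen k w g :=
  FreeGroup.lift_apply_of

theorem shift_zpow_of_inr (a : α) (j l : ℤ) :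
    (shift k w ^ j) (of (.inr (a, l))) = of (.inr (a, l + j)) :=
  MulAut.zpow_apply_of_apply_eq _
    (fun l : ℤ => (of (.inr (a, l)) : FreeGroup (Fin (k + 1) ⊕ α × ℤ)))
    (fun _ => shift_of k w _) j l

theorem shift_pow_of_inl_zero (t : Fin (k + 1)) :
    (shift k w ^ (t : ℕ)) (of (.inl 0)) = of (.inl t) := by
  induction t using Fin.induction with
  | zero => simp
  | succ t ih =>
    rw [Fin.val_succ, pow_succ', MulAut.mul_apply, ← Fin.val_castSucc, ih, shift_of, shiftGen,
      if_neg (Fin.castSucc_lt_last t).ne, Fin.coeSucc_eq_succ]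

theorem shift_pow_succ_of_inl_zero :
    (shift k w ^ (k + 1)) (of (.inl 0)) = of (.inl 0) * wordAt k w 0 := by
  have hlast := shift_pow_of_inl_zero k w (Fin.last k)
  rw [Fin.val_last] at hlast
  rw [pow_succ', MulAut.mul_apply, hlast, shift_of, shiftGen, if_pos rfl]

end ShiftExtension

/-- `x = inr (ofAdd 1)` acts by `σ⁻¹`, so that `x⁻¹ v x = σ v`. -/
abbrev ShiftExtension {α : Type*} (k : ℕ) (w : FreeGroup α) : Type _ :=
  FreeGroup (Fin (k + 1) ⊕ α × ℤ) ⋊[zpowersHom _ (ShiftExtension.shift k w)⁻¹] Multiplicative ℤ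

namespace ShiftExtension

variable {α : Type*} (k : ℕ) (w : FreeGroup α)

theorem zpow_neg_mul_inl_mul_zpow (j : ℤ) (v : FreeGroup (Fin (k + 1) ⊕ α × ℤ)) :
    (inr (ofAdd 1) : ShiftExtension k w) ^ (-j) * inl v * inr (ofAdd 1) ^ j =
      inl ((shift k w ^ j) v) := by
  have hj : (ofAdd (1 : ℤ)) ^ j = ((ofAdd (1 : ℤ)) ^ (-j))⁻¹ := by rw [zpow_neg, inv_inv]
  rw [← map_zpow (inr : Multiplicative ℤ →* ShiftExtension k w),
    ← map_zpow (inr : Multiplicative ℤ →* ShiftExtension k w), hj, ← inl_aut]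
  simp

end ShiftExtension

namespace Hgp

open ShiftExtension

variable (k n : ℕ) (u' : FreeGroup (Fin n))

theorem cj_eq_conj (i : ℤ) (g : Hgp k n u') :
    cj k n u' i g = MulAut.conj (xg k n u' ^ (-i)) g := by
  rw [cj, MulAut.conj_apply, zpow_neg, inv_inv]

theorem cj_cj (i j : ℤ) (g : Hgp k n u') :
    cj k n u' i (cj k n u' j g) = cj k n u' (j + i) g := by
  simp only [cj]
  group

theorem cj_zero (g : Hgp k n u') : cj k n u' 0 g = g := by
  simp [cj]

theorem mk_comp_map_inr :
    (PresentedGroup.mk (relOfH k n u')).comp (FreeGroup.map Sum.inr) =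
      FreeGroup.lift (yg k n u') :=
  FreeGroup.ext_hom _ _ fun _ => rfl

theorem relator_eq_one :
    (xg k n u')⁻¹ ^ k * (bg k n u')⁻¹ * xg k n u' ^ k * bg k n u' *
      FreeGroup.lift (yg k n u') u' = 1 := by
  rw [← DFunLike.congr_fun (mk_comp_map_inr k n u') u']
  exact PresentedGroup.one_of_mem (rels := relOfH k n u') rfl

theorem bi_eq_bg_mul_lift_yg : bi k n u' k = bg k n u' * FreeGroup.lift (yg k n u') u' := by
  rw [← inv_mul_eq_one, ← relator_eq_one k n u', bi, cj]
  group

def kerGen : Fin (k + 1) ⊕ Fin n × ℤ → Hgp (k + 1) n u'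
  | .inl t => bi (k + 1) n u' t
  | .inr (m, j) => yi (k + 1) n u' m j

theorem lift_kerGen_wordAt_zero :
    FreeGroup.lift (kerGen k n u') (wordAt k u' 0) = FreeGroup.lift (yg (k + 1) n u') u' := by
  rw [wordAt, FreeGroup.lift_map_apply]
  exact congrArg (FreeGroup.lift · u') (funext fun m => cj_zero _ n u' (yg _ n u' m))

theorem lift_kerGen_shiftGen (g : Fin (k + 1) ⊕ Fin n × ℤ) :
    FreeGroup.lift (kerGen k n u') (shiftGen k u' g) = cj (k + 1) n u' 1 (kerGen k n u' g) := by
  rcases g with t | ⟨m, j⟩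
  · by_cases ht : t = Fin.last k
    · subst ht
      rw [shiftGen, if_pos rfl, map_mul, FreeGroup.lift_apply_of, lift_kerGen_wordAt_zero,
        kerGen, kerGen, bi, bi, cj_cj, Fin.val_last, Fin.val_zero, Nat.cast_zero, cj_zero]
      exact_mod_cast (bi_eq_bg_mul_lift_yg (k + 1) n u').symm
    · simp only [shiftGen, ht, if_false, FreeGroup.lift_apply_of, kerGen, bi, cj_cj,
        Fin.val_add_one, Nat.cast_add, Nat.cast_one]
  · simp only [shiftGen, FreeGroup.lift_apply_of, kerGen, yi, cj_cj]

theorem lift_kerGen_shift (v : FreeGroup (Fin (k + 1) ⊕ Fin n × ℤ)) :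
    FreeGroup.lift (kerGen k n u') (shift k u' v) =
      cj (k + 1) n u' 1 (FreeGroup.lift (kerGen k n u') v) := by
  simp only [cj_eq_conj]
  refine DFunLike.congr_fun (FreeGroup.ext_hom
    ((FreeGroup.lift (kerGen k n u')).comp (shift k u').toMonoidHom)
    ((MulAut.conj _).toMonoidHom.comp (FreeGroup.lift (kerGen k n u'))) fun g => ?_) v
  simpa [shift_of, cj_eq_conj] using lift_kerGen_shiftGen k n u' g

def ofShiftExtension : ShiftExtension k u' →* Hgp (k + 1) n u' :=
  SemidirectProduct.lift (FreeGroup.lift (kerGen k n u')) (zpowersHom _ (xg (k + 1) n u'))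
    fun g => by
      have hinv : ∀ v, FreeGroup.lift (kerGen k n u') ((shift k u')⁻¹ v) =
          MulAut.conj (xg (k + 1) n u') (FreeGroup.lift (kerGen k n u') v) := fun v => by
        have h := lift_kerGen_shift k n u' ((shift k u')⁻¹ v)
        rw [MulAut.inv_apply, MulEquiv.apply_symm_apply, cj] at h
        rw [MulAut.inv_apply, MulAut.conj_apply, h]
        group
      refine MonoidHom.ext fun v => ?_
      simp only [MonoidHom.comp_apply, MulEquiv.coe_toMonoidHom, zpowersHom_apply]
      rw [MonoidHom.map_zpow_apply_of_map_apply _ _ _ hinv, ← map_zpow]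

def toShiftExtensionGen : Bool ⊕ Fin n → ShiftExtension k u'
  | .inl true => inr (ofAdd 1)
  | .inl false => inl (of (.inl 0))
  | .inr m => inl (of (.inr (m, 0)))

theorem lift_toShiftExtensionGen_map_inr :
    FreeGroup.lift (toShiftExtensionGen k n u') (FreeGroup.map Sum.inr u') =
      inl (wordAt k u' 0) :=
  DFunLike.congr_fun (FreeGroup.ext_hom
    ((FreeGroup.lift (toShiftExtensionGen k n u')).comp (FreeGroup.map Sum.inr))
    (inl.comp (FreeGroup.map fun m => .inr (m, 0))) fun _ => rfl) u'

theorem lift_toShiftExtensionGen_relator :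
    ∀ r ∈ relOfH (k + 1) n u', FreeGroup.lift (toShiftExtensionGen k n u') r = 1 := by
  rintro _ rfl
  have hconj := zpow_neg_mul_inl_mul_zpow k u' ((k + 1 : ℕ) : ℤ) (of (.inl 0))⁻¹
  simp only [zpow_neg, zpow_natCast] at hconj
  rw [map_inv (shift k u' ^ (k + 1)), shift_pow_succ_of_inl_zero] at hconj
  simp only [map_mul, map_pow, map_inv, FreeGroup.lift_apply_of,
    lift_toShiftExtensionGen_map_inr, toShiftExtensionGen]
  rw [inv_pow, ← map_inv inl, hconj, ← map_mul, ← map_mul, mul_assoc, inv_mul_cancel, map_one]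

def toShiftExtension : Hgp (k + 1) n u' →* ShiftExtension k u' :=
  PresentedGroup.toGroup (lift_toShiftExtensionGen_relator k n u')

theorem toShiftExtension_cj {g : Hgp (k + 1) n u'} {v : FreeGroup (Fin (k + 1) ⊕ Fin n × ℤ)}
    (hg : toShiftExtension k n u' g = inl v) (j : ℤ) :
    toShiftExtension k n u' (cj (k + 1) n u' j g) = inl ((shift k u' ^ j) v) := by
  rw [cj, map_mul, map_mul, hg, map_zpow, map_zpow, ← zpow_neg_mul_inl_mul_zpow]
  rfl

theorem ofShiftExtension_comp_toShiftExtension :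
    (ofShiftExtension k n u').comp (toShiftExtension k n u') = MonoidHom.id _ := by
  refine PresentedGroup.ext fun g => ?_
  rcases g with (_ | _) | m
  · show FreeGroup.lift (kerGen k n u') (of (.inl 0)) = bg (k + 1) n u'
    rw [FreeGroup.lift_apply_of, kerGen, bi, Fin.val_zero, Nat.cast_zero, cj_zero]
  · show zpowersHom _ (xg (k + 1) n u') (ofAdd 1) = xg (k + 1) n u'
    rw [zpowersHom_apply, toAdd_ofAdd, zpow_one]
  · show FreeGroup.lift (kerGen k n u') (of (.inr (m, 0))) = yg (k + 1) n u' m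
    rw [FreeGroup.lift_apply_of, kerGen, yi, cj_zero]

theorem toShiftExtension_comp_ofShiftExtension :
    (toShiftExtension k n u').comp (ofShiftExtension k n u') = MonoidHom.id _ := by
  refine SemidirectProduct.hom_ext (FreeGroup.ext_hom _ _ fun g => ?_) (MonoidHom.ext_mint ?_)
  · simp only [MonoidHom.comp_apply, MonoidHom.id_apply, ofShiftExtension,
      SemidirectProduct.lift_inl, FreeGroup.lift_apply_of]
    rcases g with t | ⟨m, j⟩
    · rw [kerGen, bi, toShiftExtension_cj k n u' (v := of (.inl 0)) rfl, zpow_natCast,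
        shift_pow_of_inl_zero]
    · rw [kerGen, yi, toShiftExtension_cj k n u' (v := of (.inr (m, 0))) rfl,
        shift_zpow_of_inr, zero_add]
  · show toShiftExtension k n u' (zpowersHom _ (xg (k + 1) n u') (ofAdd 1)) = inr (ofAdd 1)
    rw [zpowersHom_apply, toAdd_ofAdd, zpow_one]
    rfl

def equivShiftExtension : Hgp (k + 1) n u' ≃* ShiftExtension k u' :=
  MonoidHom.toMulEquiv _ _ (ofShiftExtension_comp_toShiftExtension k n u')
    (toShiftExtension_comp_ofShiftExtension k n u')

variable {k n u'} {φ : Hgp (k + 1) n u' →* Multiplicative ℤ}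

theorem _root_.IsExpSum.apply_eq_rightHom (hφ : IsExpSum (k + 1) n u' φ) (g : Hgp (k + 1) n u') :
    φ g = rightHom (equivShiftExtension k n u' g) := by
  refine DFunLike.congr_fun (PresentedGroup.ext (ψ := rightHom.comp (toShiftExtension k n u'))
    fun g => ?_) g
  rcases g with (_ | _) | m
  · exact hφ.2.1
  · exact hφ.1
  · exact hφ.2.2 m

def kernelBasis (hφ : IsExpSum (k + 1) n u' φ) :
    FreeGroupBasis (Fin (k + 1) ⊕ Fin n × ℤ) φ.ker :=
  .ofRepr (kerEquivOfMulEquiv (equivShiftExtension k n u') φ hφ.apply_eq_rightHom)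

theorem kernelBasis_apply (hφ : IsExpSum (k + 1) n u' φ) (g : Fin (k + 1) ⊕ Fin n × ℤ) :
    (kernelBasis hφ g : Hgp (k + 1) n u') = kerGen k n u' g := by
  show ofShiftExtension k n u' (inl (of g)) = _
  rw [ofShiftExtension, SemidirectProduct.lift_inl, FreeGroup.lift_apply_of]

theorem conj_kernelBasis_apply (hφ : IsExpSum (k + 1) n u' φ) (i : ℤ)
    (g : Fin (k + 1) ⊕ Fin n × ℤ) :
    (MulAut.conjNormal (xg (k + 1) n u' ^ (-i)) (kernelBasis hφ g) : Hgp (k + 1) n u') =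
      cj (k + 1) n u' i (kerGen k n u' g) := by
  rw [MulAut.conjNormal_apply, kernelBasis_apply, cj_eq_conj, MulAut.conj_apply]

end Hgp

theorem kernel_free_with_bases_general (k n : ℕ) (hk : 1 ≤ k)
    (u' : FreeGroup (Fin n))
    (φ : Hgp k n u' →* Multiplicative ℤ) (hφ : IsExpSum k n u' φ) :
    IsFreeGroup ↥φ.ker ∧
      ∀ i : ℤ, ∃ basis : FreeGroupBasis (Fin k ⊕ Fin n × ℤ) ↥φ.ker,
        (∀ t : Fin k, (basis (Sum.inl t) : Hgp k n u') = bi k n u' (i + (t : ℕ))) ∧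
        (∀ m : Fin n, ∀ j : ℤ, (basis (Sum.inr (m, j)) : Hgp k n u') = yi k n u' m j) := by
  obtain ⟨k, rfl⟩ := Nat.exists_eq_add_of_le' hk
  let B := Hgp.kernelBasis hφ
  refine ⟨B.isFreeGroup, fun i => ⟨(B.map (MulAut.conjNormal (xg (k + 1) n u' ^ (-i)))).reindex
    ((Equiv.refl _).sumCongr ((Equiv.refl _).prodCongr (Equiv.addRight i))), fun t => ?_,
    fun m j => ?_⟩⟩
  · rw [FreeGroupBasis.reindex_apply, FreeGroupBasis.map_apply, Hgp.conj_kernelBasis_apply]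
    simp [Hgp.kerGen, bi, Hgp.cj_cj, add_comm]
  · rw [FreeGroupBasis.reindex_apply, FreeGroupBasis.map_apply, Hgp.conj_kernelBasis_apply]
    simp [Hgp.kerGen, yi, Hgp.cj_cj]

/-- The kernel `N` of the exponent-sum-in-`x` homomorphism `φ : H → ℤ` is a free group, and for
every `i ∈ ℤ` the family `B(i) = {b_i, …, b_{i+k-1}} ∪ {y_{m,j} : 1 ≤ m ≤ n, j ∈ ℤ}` is a free
basis of `N`. -/
theorem kernel_free_with_bases (k n : ℕ) (hk : 1 ≤ k) (hn : 1 ≤ n)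
    (u' : FreeGroup (Fin n)) (hu : u' ≠ 1)
    (φ : Hgp k n u' →* Multiplicative ℤ) (hφ : IsExpSum k n u' φ) :
    IsFreeGroup ↥φ.ker ∧
      ∀ i : ℤ, ∃ basis : FreeGroupBasis (Fin k ⊕ Fin n × ℤ) ↥φ.ker,
        (∀ t : Fin k, (basis (Sum.inl t) : Hgp k n u') = bi k n u' (i + (t : ℕ))) ∧
        (∀ m : Fin n, ∀ j : ℤ, (basis (Sum.inr (m, j)) : Hgp k n u') = yi k n u' m j) :=
  kernel_free_with_bases_general k n hk u' φ hφ
end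

section
/- With the presentation N = ⟨ ⋃_{i∈ℤ} Y_i | b_i u_i = b_{i+k} (i ∈ ℤ) ⟩ where Y_i = {b_i, y_{1,i}, …, y_{n,i}}, each group N_l (the amalgamated product … * G_{l-k} *_{Z_l} G_l *_{Z_{l+k}} G_{l+k} * …) is free with basis B_l = {b_l} ∪ {y_{m,l+tk} : 1 ≤ m ≤ n, t ∈ ℤ}. -/
/-!
Let `F` be the free group on letters `a_r` (`r ∈ ℤ/k`, standing for `b_0, …, b_{k-1}`) and
`y_{m,i}`. Conjugation by `x` is modelled by the automorphism `c` of `F` with `a_r ↦ a_{r+1}`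
(`r ≠ -1`), `a_{-1} ↦ a_0 u_0`, `y_{m,i} ↦ y_{m,i+1}`: a permutation of the letters followed by a
transvection. Since `c^k(a_0) = a_0 u_0`, the relator of `H` dies in the mapping torus `F ⋊_c ℤ`,
giving a homomorphism `H → F ⋊_c ℤ` with `b_i ↦ c^i(a_0)` and `y_{m,i} ↦ y_{m,i}`. It sends `b_l`
and the `y_{m,l+tk}` to the images under `c^l` of the distinct letters `a_0`, `y_{m,tk}`, so they
form a free basis of the subgroup they generate. That subgroup contains every `b_{l+tk}`, because
`b_{j+k} = b_j u_j` in `H`.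
-/

namespace FreeGroup

variable {α β : Type*}

def sumTransvection (f : α → FreeGroup β) : FreeGroup (α ⊕ β) →* FreeGroup (α ⊕ β) :=
  lift (Sum.elim (fun a => of (.inl a) * map .inr (f a)) (fun b => of (.inr b)))

@[simp] lemma sumTransvection_of_inl (f : α → FreeGroup β) (a : α) :
    sumTransvection f (of (.inl a)) = of (.inl a) * map .inr (f a) := by
  simp [sumTransvection]

@[simp] lemma sumTransvection_of_inr (f : α → FreeGroup β) (b : β) :
    sumTransvection f (of (.inr b)) = of (.inr b) := by
  simp [sumTransvection]

@[simp] lemma sumTransvection_map_inr (f : α → FreeGroup β) (x : FreeGroup β) :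
    sumTransvection f (map .inr x) = map .inr x := by
  induction x using FreeGroup.induction_on <;> simp_all

lemma sumTransvection_comp (f g : α → FreeGroup β) :
    (sumTransvection g).comp (sumTransvection f) = sumTransvection (g * f) := by
  ext (a | b) <;> simp [mul_assoc]

lemma sumTransvection_one : sumTransvection (1 : α → FreeGroup β) = MonoidHom.id _ := by
  ext (a | b) <;> simp

def sumTransvectionEquiv (f : α → FreeGroup β) :
    FreeGroup (α ⊕ β) ≃* FreeGroup (α ⊕ β) :=
  (sumTransvection f).toMulEquiv (sumTransvection f⁻¹)
    (by rw [sumTransvection_comp, inv_mul_cancel, sumTransvection_one])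
    (by rw [sumTransvection_comp, mul_inv_cancel, sumTransvection_one])

@[simp] lemma sumTransvectionEquiv_apply (f : α → FreeGroup β) (x : FreeGroup (α ⊕ β)) :
    sumTransvectionEquiv f x = sumTransvection f x := rfl

end FreeGroup

lemma FreeGroupBasis.exists_of_injective_lift {ι G : Type*} [Group G] {f : ι → G}
    (hf : Function.Injective (FreeGroup.lift f)) {K : Subgroup G}
    (hK : Subgroup.closure (Set.range f) = K) :
    ∃ b : FreeGroupBasis ι K, ∀ i, (b i : G) = f i := by
  let e := (MonoidHom.ofInjective hf).trans
    (MulEquiv.subgroupCongr (FreeGroup.range_lift_eq_closure.trans hK))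
  exact ⟨(FreeGroupBasis.ofFreeGroup ι).map e,
    fun i => by simp [e, MonoidHom.ofInjective_apply]⟩

lemma SemidirectProduct.inr_zpow_conj_inl {N : Type*} [Group N] (c : MulAut N) (i : ℤ) (v : N) :
    (inr (.ofAdd (-1)) : N ⋊[zpowersHom _ c] Multiplicative ℤ) ^ (-i) * inl v *
      inr (.ofAdd (-1)) ^ i = inl ((c ^ i) v) := by
  have h := inl_aut (φ := zpowersHom _ c) (Multiplicative.ofAdd (-1) ^ (-i)) v
  rw [← zpow_neg, neg_neg, map_zpow, map_zpow, map_zpow] at h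
  rw [← h]
  simp

namespace OneRelatorKernel

variable (k : ℕ) {n : ℕ} (u' : FreeGroup (Fin n))

lemma cj_add (i j : ℤ) (g : Hgp k n u') : cj k n u' (i + j) g = cj k n u' j (cj k n u' i g) := by
  simp only [cj]
  group

lemma cj_eq_conj (i : ℤ) (g : Hgp k n u') : cj k n u' i g = MulAut.conj (xg k n u' ^ (-i)) g := by
  rw [cj, MulAut.conj_apply, zpow_neg, inv_inv]

lemma ui_eq_lift (i : ℤ) : ui k n u' i = FreeGroup.lift (fun m => yi k n u' m i) u' := by
  rw [ui, cj_eq_conj]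
  exact FreeGroup.lift_unique ((MulAut.conj _).toMonoidHom.comp (FreeGroup.lift (yg k n u')))
    (fun m => by simp [yi, cj_eq_conj])

lemma relator_eq_one :
    (xg k n u')⁻¹ ^ k * (bg k n u')⁻¹ * xg k n u' ^ k * bg k n u' *
      FreeGroup.lift (yg k n u') u' = 1 := by
  have hmap (w : FreeGroup (Fin n)) : PresentedGroup.mk (relOfH k n u') (FreeGroup.map .inr w) =
      FreeGroup.lift (yg k n u') w := by
    induction w using FreeGroup.induction_on <;> simp_all [yg, PresentedGroup.of]
  simpa [hmap, xg, bg, PresentedGroup.of] using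
    PresentedGroup.one_of_mem (rels := relOfH k n u') rfl

lemma bi_natCast_self : bi k n u' k = bg k n u' * FreeGroup.lift (yg k n u') u' := by
  have h : (bi k n u' k)⁻¹ * (bg k n u' * FreeGroup.lift (yg k n u') u') =
      (xg k n u')⁻¹ ^ k * (bg k n u')⁻¹ * xg k n u' ^ k * bg k n u' *
        FreeGroup.lift (yg k n u') u' := by
    simp only [bi, cj]
    group
  exact inv_mul_eq_one.mp (h.trans (relator_eq_one k u'))

lemma bi_add_natCast_self (j : ℤ) : bi k n u' (j + k) = bi k n u' j * ui k n u' j := by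
  rw [bi, add_comm, cj_add, ← bi, bi_natCast_self, cj_eq_conj, map_mul, ← cj_eq_conj,
    ← cj_eq_conj]
  rfl

/-- `inl r` stands for `b_r`, `0 ≤ r < k`, and `inr (m, i)` for `y_{m,i}`. -/
abbrev Letter (k n : ℕ) : Type := ZMod k ⊕ Fin n × ℤ

def letterShift : Letter k n ≃ Letter k n :=
  Equiv.sumCongr (Equiv.addRight 1) (Equiv.prodCongr (Equiv.refl _) (Equiv.addRight 1))

def shiftAut : MulAut (FreeGroup (Letter k n)) :=
  (FreeGroup.freeGroupCongr (letterShift k)).trans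
    (FreeGroup.sumTransvectionEquiv (Pi.mulSingle 0 (FreeGroup.map (·, 0) u')))

lemma shiftAut_of_inl (r : ZMod k) :
    shiftAut k u' (FreeGroup.of (.inl r)) = FreeGroup.of (.inl (r + 1)) *
      FreeGroup.map .inr ((Pi.mulSingle 0 (FreeGroup.map (·, 0) u') : ZMod k → _) (r + 1)) := by
  simp [shiftAut, letterShift]

lemma shiftAut_of_inr (m : Fin n) (j : ℤ) :
    shiftAut k u' (FreeGroup.of (.inr (m, j))) = FreeGroup.of (.inr (m, j + 1)) := by
  simp [shiftAut, letterShift]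

lemma shiftAut_zpow_of_inr (i : ℤ) (m : Fin n) (j : ℤ) :
    (shiftAut k u' ^ i) (FreeGroup.of (.inr (m, j))) = FreeGroup.of (.inr (m, j + i)) := by
  induction i using Int.induction_on generalizing j with
  | zero => simp
  | succ i ih =>
    rw [zpow_add_one, MulAut.mul_apply, shiftAut_of_inr, ih]
    ring_nf
  | pred i ih =>
    have h : (shiftAut k u').symm (FreeGroup.of (.inr (m, j))) =
        FreeGroup.of (.inr (m, j - 1)) := by
      rw [MulEquiv.symm_apply_eq, shiftAut_of_inr, sub_add_cancel]
    rw [zpow_sub_one, MulAut.mul_apply, MulAut.inv_apply, h, ih]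
    ring_nf

lemma shiftAut_pow_of_inl_zero {j : ℕ} (hj : j < k) :
    (shiftAut k u' ^ j) (FreeGroup.of (.inl 0)) = FreeGroup.of (.inl (j : ZMod k)) := by
  induction j with
  | zero => simp
  | succ j ih =>
    have hne : ((j + 1 : ℕ) : ZMod k) ≠ 0 := by
      rw [Ne, ZMod.natCast_eq_zero_iff]
      exact Nat.not_dvd_of_pos_of_lt j.succ_pos hj
    rw [pow_succ', MulAut.mul_apply, ih (by omega), shiftAut_of_inl, ← Nat.cast_succ,
      Pi.mulSingle_eq_of_ne hne, map_one, mul_one]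

lemma shiftAut_pow_self_of_inl_zero (hk : k ≠ 0) :
    (shiftAut k u' ^ k) (FreeGroup.of (.inl 0)) =
      FreeGroup.of (.inl 0) * FreeGroup.map .inr (FreeGroup.map (·, 0) u') := by
  obtain ⟨j, rfl⟩ := Nat.exists_eq_succ_of_ne_zero hk
  rw [pow_succ', MulAut.mul_apply, shiftAut_pow_of_inl_zero _ u' j.lt_succ_self, shiftAut_of_inl,
    ← Nat.cast_succ, ZMod.natCast_self, Pi.mulSingle_eq_same]

abbrev MappingTorus : Type :=
  FreeGroup (Letter k n) ⋊[zpowersHom _ (shiftAut k u')] Multiplicative ℤ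

def torusGen : Bool ⊕ Fin n → MappingTorus k u'
  | .inl true => SemidirectProduct.inr (.ofAdd (-1))
  | .inl false => SemidirectProduct.inl (FreeGroup.of (.inl 0))
  | .inr m => SemidirectProduct.inl (FreeGroup.of (.inr (m, 0)))

lemma lift_torusGen_map_inr (w : FreeGroup (Fin n)) :
    FreeGroup.lift (torusGen k u') (FreeGroup.map .inr w) =
      SemidirectProduct.inl (FreeGroup.map .inr (FreeGroup.map (·, 0) w)) := by
  induction w using FreeGroup.induction_on <;> simp_all [torusGen]

lemma lift_torusGen_relator (hk : k ≠ 0) :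
    ∀ r ∈ relOfH k n u', FreeGroup.lift (torusGen k u') r = 1 := by
  rintro _ rfl
  have hconj := SemidirectProduct.inr_zpow_conj_inl (shiftAut k u') k (FreeGroup.of (.inl 0))
  simp only [zpow_natCast] at hconj
  rw [shiftAut_pow_self_of_inl_zero k u' hk] at hconj
  simp only [map_mul, map_pow, map_inv, FreeGroup.lift_apply_of, lift_torusGen_map_inr, torusGen]
  rw [show ∀ t a : MappingTorus k u', t⁻¹ ^ k * a⁻¹ * t ^ k = (t ^ (-(k : ℤ)) * a * t ^ k)⁻¹
    from fun t a => by group, hconj, map_mul]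
  group

def toTorus (hk : k ≠ 0) : Hgp k n u' →* MappingTorus k u' :=
  PresentedGroup.toGroup (lift_torusGen_relator k u' hk)

lemma toTorus_cj (hk : k ≠ 0) (i : ℤ) {g : Hgp k n u'} {v : FreeGroup (Letter k n)}
    (hg : toTorus k u' hk g = SemidirectProduct.inl v) :
    toTorus k u' hk (cj k n u' i g) = SemidirectProduct.inl ((shiftAut k u' ^ i) v) := by
  rw [cj, map_mul, map_mul, map_zpow, map_zpow, hg, xg, toTorus, PresentedGroup.toGroup.of]
  exact SemidirectProduct.inr_zpow_conj_inl _ i v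

lemma toTorus_bi (hk : k ≠ 0) (i : ℤ) :
    toTorus k u' hk (bi k n u' i) =
      SemidirectProduct.inl ((shiftAut k u' ^ i) (FreeGroup.of (.inl 0))) :=
  toTorus_cj k u' hk i (PresentedGroup.toGroup.of _)

lemma toTorus_yi (hk : k ≠ 0) (m : Fin n) (i : ℤ) :
    toTorus k u' hk (yi k n u' m i) = SemidirectProduct.inl (FreeGroup.of (.inr (m, i))) := by
  rw [yi, toTorus_cj k u' hk i (PresentedGroup.toGroup.of _), shiftAut_zpow_of_inr, zero_add]

def basisFun (l : ℤ) : Unit ⊕ Fin n × ℤ → Hgp k n u' :=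
  Sum.elim (fun _ => bi k n u' l) (fun p => yi k n u' p.1 (l + p.2 * k))

lemma toTorus_comp_lift_basisFun (hk : k ≠ 0) (l : ℤ) :
    (toTorus k u' hk).comp (FreeGroup.lift (basisFun k u' l)) =
      (SemidirectProduct.inl.comp (shiftAut k u' ^ l).toMonoidHom).comp
        (FreeGroup.map (Sum.map (fun _ => 0) (fun p => (p.1, p.2 * k)))) := by
  refine FreeGroup.ext_hom _ _ ?_
  rintro (_ | ⟨m, t⟩)
  · simp [basisFun, toTorus_bi]
  · simp [basisFun, toTorus_yi, shiftAut_zpow_of_inr, add_comm]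

lemma injective_lift_basisFun (hk : k ≠ 0) (l : ℤ) :
    Function.Injective (FreeGroup.lift (basisFun k u' l)) := by
  have hletters : Function.Injective
      (Sum.map (fun _ => (0 : ZMod k)) (fun p : Fin n × ℤ => (p.1, p.2 * k))) :=
    (Function.injective_of_subsingleton (α := Unit) _).sumMap
      (Function.injective_id.prodMap (mul_left_injective₀ (by exact_mod_cast hk)))
  refine Function.Injective.of_comp (f := toTorus k u' hk) ?_
  rw [← MonoidHom.coe_comp, toTorus_comp_lift_basisFun]
  exact (SemidirectProduct.inl_injective.comp (MulEquiv.injective _)).comp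
    (FreeGroup.map_injective hletters)

lemma closure_range_basisFun (l : ℤ) :
    Subgroup.closure (Set.range (basisFun k u' l)) = Subgroup.closure
      ({g | ∃ t : ℤ, g = bi k n u' (l + t * k)} ∪
        {g | ∃ m : Fin n, ∃ t : ℤ, g = yi k n u' m (l + t * k)}) := by
  set K := Subgroup.closure (Set.range (basisFun k u' l))
  have hy (m : Fin n) (t : ℤ) : yi k n u' m (l + t * k) ∈ K :=
    Subgroup.subset_closure ⟨.inr (m, t), rfl⟩
  have hu (t : ℤ) : ui k n u' (l + t * k) ∈ K := by
    rw [ui_eq_lift]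
    exact FreeGroup.range_lift_le (by rintro _ ⟨m, rfl⟩; exact hy m t) ⟨u', rfl⟩
  have hb (t : ℤ) : bi k n u' (l + t * k) ∈ K := by
    induction t using Int.induction_on with
    | zero =>
      simpa [K, basisFun] using
        Subgroup.subset_closure (Set.mem_range_self (f := basisFun k u' l) (.inl ()))
    | succ t ih =>
      rw [add_one_mul, ← add_assoc, bi_add_natCast_self]
      exact mul_mem ih (hu t)
    | pred t ih =>
      have h := bi_add_natCast_self k u' (l + (-t - 1) * k)
      rw [show l + (-t - 1) * k + k = l + -t * k by ring] at h
      rw [eq_mul_inv_of_mul_eq h.symm]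
      exact mul_mem ih (inv_mem (hu _))
  refine le_antisymm (Subgroup.closure_mono ?_) (Subgroup.closure_le _ |>.mpr ?_)
  · rintro _ ⟨_ | ⟨m, t⟩, rfl⟩
    · exact .inl ⟨0, by simp [basisFun]⟩
    · exact .inr ⟨m, t, rfl⟩
  · rintro _ (⟨t, rfl⟩ | ⟨m, t, rfl⟩)
    · exact hb t
    · exact hy m t

end OneRelatorKernel

theorem Nl_free_with_basis_general (k n : ℕ) (hk : 1 ≤ k)
    (u' : FreeGroup (Fin n)) (l : ℤ) :
    ∃ basis : FreeGroupBasis (Unit ⊕ Fin n × ℤ)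
        ↥(Subgroup.closure
          ({g | ∃ t : ℤ, g = bi k n u' (l + t * k)} ∪
           {g | ∃ m : Fin n, ∃ t : ℤ, g = yi k n u' m (l + t * k)})),
      ((basis (Sum.inl ()) : Hgp k n u') = bi k n u' l) ∧
      (∀ m : Fin n, ∀ t : ℤ,
        (basis (Sum.inr (m, t)) : Hgp k n u') = yi k n u' m (l + t * k)) := by
  obtain ⟨basis, hbasis⟩ := FreeGroupBasis.exists_of_injective_lift
    (OneRelatorKernel.injective_lift_basisFun k u' (Nat.one_le_iff_ne_zero.mp hk) l)
    (OneRelatorKernel.closure_range_basisFun k u' l)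
  exact ⟨basis, hbasis _, fun _ _ => hbasis _⟩

/-- The group `N_l` (generated inside `H` by the groups `G_{l+tk}`, `t ∈ ℤ`) is free with basis
`B_l = {b_l} ∪ {y_{m,l+tk} : 1 ≤ m ≤ n, t ∈ ℤ}`. -/
theorem Nl_free_with_basis (k n : ℕ) (hk : 1 ≤ k) (hn : 1 ≤ n)
    (u' : FreeGroup (Fin n)) (hu : u' ≠ 1) (l : ℤ) :
    ∃ basis : FreeGroupBasis (Unit ⊕ Fin n × ℤ)
        ↥(Subgroup.closure
          ({g | ∃ t : ℤ, g = bi k n u' (l + t * k)} ∪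
           {g | ∃ m : Fin n, ∃ t : ℤ, g = yi k n u' m (l + t * k)})),
      ((basis (Sum.inl ()) : Hgp k n u') = bi k n u' l) ∧
      (∀ m : Fin n, ∀ t : ℤ,
        (basis (Sum.inr (m, t)) : Hgp k n u') = yi k n u' m (l + t * k)) :=
  Nl_free_with_basis_general k n hk u' l
end

section
/- Let r ∈ N be a non-trivial element with ω_r − α_r + 1 ≥ 1. Then the reduced word representing r in the free basis B⁺(α_r) = {b_{α_r}, …, b_{α_r+k−1}} ∪ {y_{m,j} : 1 ≤ m ≤ n, j ≥ α_r} of G_{α_r,∞} contains at least one letter y_{m,l} with l ≥ ω_r. -/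
/-!
If every letter `y_{m,l}` of the word of `r` had `l < ω_r`, every letter would lie in
`G_{−∞,ω_r−1}`: the `y`-letters by assumption, and the letters `b_{α_r+t}` (`t < k`) because the
relator gives `b_{j+k} = b_j u_j` with `u_j` a word in the `y_{m,j}`, and `α_r + t − k < ω_r`.
Then `r ∈ G_{−∞,ω_r−1}`, contradicting the minimality of `ω_r`.
-/

theorem FreeGroupBasis.mem_of_forall_toWord_mem {ι G : Type*} [Group G] [DecidableEq ι]
    (b : FreeGroupBasis ι G) {S : Subgroup G} {g : G}
    (h : ∀ p ∈ (b.repr g).toWord, b p.1 ∈ S) : g ∈ S := by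
  have hlift : (b.repr.symm : FreeGroup ι →* G) = FreeGroup.lift b :=
    FreeGroup.ext_hom _ _ fun _ => (FreeGroup.lift_apply_of ..).symm
  rw [← b.repr.symm_apply_apply g, ← FreeGroup.mk_toWord (x := b.repr g)]
  change (b.repr.symm : FreeGroup ι →* G) _ ∈ S
  rw [hlift, FreeGroup.lift_mk]
  refine S.list_prod_mem fun x hx => ?_
  obtain ⟨⟨i, s⟩, hp, rfl⟩ := List.mem_map.1 hx
  cases s
  · exact S.inv_mem (h _ hp)
  · exact h _ hp

section OneRelatorGroup

variable (k n : ℕ) (u' : FreeGroup (Fin n))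

theorem relator_eq_one :
    (xg k n u')⁻¹ ^ k * (bg k n u')⁻¹ * xg k n u' ^ k * bg k n u' *
      FreeGroup.lift (yg k n u') u' = 1 := by
  have hu : PresentedGroup.mk (relOfH k n u') (FreeGroup.map Sum.inr u') =
      FreeGroup.lift (yg k n u') u' := by
    rw [← MonoidHom.comp_apply]
    exact DFunLike.congr_fun (FreeGroup.ext_hom ((PresentedGroup.mk _).comp (FreeGroup.map _))
      (FreeGroup.lift (yg k n u')) fun _ => rfl) u'
  rw [← hu, ← PresentedGroup.one_of_mem (show _ ∈ relOfH k n u' from rfl)]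
  simp only [map_mul, map_pow, map_inv]
  rfl

theorem bi_natCast : bi k n u' k = bg k n u' * FreeGroup.lift (yg k n u') u' := by
  have h : (xg k n u' ^ k)⁻¹ * (bg k n u')⁻¹ * xg k n u' ^ k *
      (bg k n u' * FreeGroup.lift (yg k n u') u') = 1 := by
    rw [← relator_eq_one k n u']
    group
  rw [bi, cj, ← inv_inv (bg k n u' * FreeGroup.lift (yg k n u') u'),
    ← eq_inv_of_mul_eq_one_left h]
  group

theorem cj_add (i j : ℤ) (g : Hgp k n u') :
    cj k n u' (i + j) g = cj k n u' j (cj k n u' i g) := by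
  simp only [cj, neg_add, zpow_add]
  group

theorem bi_add_natCast (j : ℤ) : bi k n u' (j + k) = bi k n u' j * ui k n u' j := by
  rw [bi, add_comm, cj_add, ← bi, bi_natCast, ui, bi, cj, cj, cj]
  group

theorem ui_eq_lift_yi (j : ℤ) : ui k n u' j = FreeGroup.lift (fun m => yi k n u' m j) u' := by
  let c := (MulAut.conj (xg k n u' ^ (-j))).toMonoidHom
  have hc : ∀ g, c g = cj k n u' j g := fun g => by
    simp only [c, MulEquiv.coe_toMonoidHom, MulAut.conj_apply, cj, ← zpow_neg, neg_neg]
  have hlift : c.comp (FreeGroup.lift (yg k n u')) = FreeGroup.lift (fun m => yi k n u' m j) :=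
    FreeGroup.ext_hom _ _ fun m => by simp [hc, yi]
  rw [← hlift, MonoidHom.comp_apply, hc, ui]

variable {k n u'}

theorem bi_mem_Gle {i j : ℤ} (h : j ≤ i) : bi k n u' j ∈ Gle k n u' i :=
  Subgroup.subset_closure (Or.inl ⟨j, h, rfl⟩)

theorem yi_mem_Gle (m : Fin n) {i j : ℤ} (h : j ≤ i) : yi k n u' m j ∈ Gle k n u' i :=
  Subgroup.subset_closure (Or.inr ⟨m, j, h, rfl⟩)

theorem ui_mem_Gle {i j : ℤ} (h : j ≤ i) : ui k n u' j ∈ Gle k n u' i := by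
  rw [ui_eq_lift_yi]
  exact FreeGroup.range_lift_eq_closure.trans_le
    ((Subgroup.closure_le _).2 (Set.range_subset_iff.2 fun m => yi_mem_Gle m h)) ⟨u', rfl⟩

theorem bi_mem_Gle_of_sub_le {i j : ℤ} (h : j - k ≤ i) : bi k n u' j ∈ Gle k n u' i := by
  rw [← sub_add_cancel j k, bi_add_natCast]
  exact mul_mem (bi_mem_Gle h) (ui_mem_Gle h)

end OneRelatorGroup

theorem letter_with_large_index_general (k n : ℕ)
    (u' : FreeGroup (Fin n))
    (r : Hgp k n u')
    (a w : ℤ) (ha : IsAlphaLimit k n u' r a) (hw : IsOmegaLimit k n u' r w)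
    (hlen : 1 ≤ w - a + 1)
    (basis : FreeGroupBasis (Fin k ⊕ Fin n × ℕ) ↥(Gge k n u' a))
    (hb : ∀ t : Fin k, (basis (Sum.inl t) : Hgp k n u') = bi k n u' (a + (t : ℕ)))
    (hy : ∀ m : Fin n, ∀ t : ℕ,
      (basis (Sum.inr (m, t)) : Hgp k n u') = yi k n u' m (a + t)) :
    ∃ (m : Fin n) (t : ℕ) (s : Bool),
      (Sum.inr (m, t), s) ∈ (basis.repr ⟨r, ha.1⟩).toWord ∧ w ≤ a + t := by
  by_contra! hsmall
  have hr : (⟨r, ha.1⟩ : Gge k n u' a) ∈ (Gle k n u' (w - 1)).comap (Gge k n u' a).subtype := by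
    refine basis.mem_of_forall_toWord_mem ?_
    rintro ⟨t | ⟨m, t⟩, s⟩ hp
    · show (basis (Sum.inl t) : Hgp k n u') ∈ Gle k n u' (w - 1)
      rw [hb t]
      exact bi_mem_Gle_of_sub_le (by omega)
    · show (basis (Sum.inr (m, t)) : Hgp k n u') ∈ Gle k n u' (w - 1)
      rw [hy m t]
      exact yi_mem_Gle m (by linarith [hsmall m t s hp])
  linarith [hw.2 (w - 1) hr]

/-- Lemma 4.3: if `r ∈ N` is non-trivial with `ω_r − α_r + 1 ≥ 1`, then the reduced word
representing `r` in the basis `B⁺(α_r) = {b_{α_r}, …, b_{α_r+k−1}} ∪ {y_{m,j} : j ≥ α_r}` of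
`G_{α_r,∞}` (indexed here by `Fin k ⊕ Fin n × ℕ`, with `(m, t)` standing for `y_{m,α_r+t}`)
contains a letter `y_{m,l}` with `l ≥ ω_r`. -/
theorem letter_with_large_index (k n : ℕ) (hk : 1 ≤ k) (hn : 1 ≤ n)
    (u' : FreeGroup (Fin n)) (hu : u' ≠ 1)
    (φ : Hgp k n u' →* Multiplicative ℤ) (hφ : IsExpSum k n u' φ)
    (r : Hgp k n u') (hr : r ∈ φ.ker) (hr1 : r ≠ 1)
    (a w : ℤ) (ha : IsAlphaLimit k n u' r a) (hw : IsOmegaLimit k n u' r w)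
    (hlen : 1 ≤ w - a + 1)
    (basis : FreeGroupBasis (Fin k ⊕ Fin n × ℕ) ↥(Gge k n u' a))
    (hb : ∀ t : Fin k, (basis (Sum.inl t) : Hgp k n u') = bi k n u' (a + (t : ℕ)))
    (hy : ∀ m : Fin n, ∀ t : ℕ,
      (basis (Sum.inr (m, t)) : Hgp k n u') = yi k n u' m (a + t)) :
    ∃ (m : Fin n) (t : ℕ) (s : Bool),
      (Sum.inr (m, t), s) ∈ (basis.repr ⟨r, ha.1⟩).toWord ∧ w ≤ a + t :=
  letter_with_large_index_general k n u' r a w ha hw hlen basis hb hy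
end

section
/- Let r ∈ N be a non-trivial element with ω_r − α_r + 1 < 1 (i.e., ω_r < α_r). Then the reduced word representing r in the free basis B⁺(α_r) of G_{α_r,∞} contains only letters b_i and no letters y_{m,j}. -/
/-! `H` maps to the semidirect product `F ⋊ ℤ`, where `F` is free on letters `e₀, …, e_{k-1}`
(standing for `b_a, …, b_{a+k-1}`) and `y_{m,j}` (`j ∈ ℤ`), and `x` acts by the automorphism `τ`
with `τ eₜ = eₜ₊₁` for `t < k - 1`, `τ e_{k-1} = e₀ u_a` and `τ y_{m,j} = y_{m,j+1}`; then
`b_j ↦ τ^{j-a} e₀`, so the basis `B⁺(a)` goes to letters of `F`. The retraction of `F` onto the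
free group on `B⁺(a)` that kills every `y_{m,j}` with `j < a` sends each `b_j` with `j < a + k`
into the subgroup generated by the `b`-letters, because `b_j = b_{j+k} u_j⁻¹`. As `ω < α`, this
applies to all generators of `G_{−∞,ω} ∋ r`. -/

namespace FreeGroup

variable {α β : Type*}

theorem apply_map_eq_lift {G : Type*} [Group G] (g : FreeGroup β →* G) (f : α → β)
    (x : FreeGroup α) : g (map f x) = lift (fun a => g (of (f a))) x :=
  lift_unique (g.comp (map f)) (by simp)

theorem toWord_map_of_injective [DecidableEq α] [DecidableEq β] {f : α → β}
    (hf : Function.Injective f) (x : FreeGroup α) :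
    (map f x).toWord = x.toWord.map fun p => (f p.1, p.2) := by
  have hred : IsReduced (x.toWord.map fun p => (f p.1, p.2)) :=
    (List.isChain_map _).2 (isReduced_toWord.imp fun _ _ h heq => h (hf heq))
  conv_lhs => rw [← mk_toWord (x := x)]
  rw [map.mk, toWord_mk, hred.reduce_eq]

end FreeGroup

open FreeGroup (of lift map lift_apply_of map_eq_lift apply_map_eq_lift)

namespace HModel

-- `k + 1` letters `eₜ` rather than `k`, so that `Fin.lastCases` and `Fin.cases` apply.
abbrev Free (k n : ℕ) : Type := FreeGroup (Fin (k + 1) ⊕ Fin n × ℤ)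

variable {k n : ℕ} (u' : FreeGroup (Fin n)) (a : ℤ)

def uAt (i : ℤ) : Free k n := map (fun m => .inr (m, i)) u'

def shiftFun : Fin (k + 1) ⊕ Fin n × ℤ → Free k n :=
  Sum.elim (Fin.lastCases (of (.inl 0) * uAt u' a) fun t => of (.inl t.succ))
    fun p => of (.inr (p.1, p.2 + 1))

def unshiftFun : Fin (k + 1) ⊕ Fin n × ℤ → Free k n :=
  Sum.elim (Fin.cases (of (.inl (Fin.last k)) * (uAt u' (a - 1))⁻¹) fun t => of (.inl t.castSucc))
    fun p => of (.inr (p.1, p.2 - 1))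

theorem lift_shiftFun_uAt (i : ℤ) : lift (shiftFun u' a) (uAt (k := k) u' i) = uAt u' (i + 1) := by
  rw [uAt, apply_map_eq_lift, uAt, map_eq_lift]
  simp [shiftFun, Function.comp_def]

theorem lift_unshiftFun_uAt (i : ℤ) :
    lift (unshiftFun u' a) (uAt (k := k) u' i) = uAt u' (i - 1) := by
  rw [uAt, apply_map_eq_lift, uAt, map_eq_lift]
  simp [unshiftFun, Function.comp_def]

theorem lift_unshiftFun_comp_lift_shiftFun :
    (lift (unshiftFun (k := k) u' a)).comp (lift (shiftFun u' a)) = .id _ := by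
  ext (t | ⟨m, i⟩)
  · induction t using Fin.lastCases with
    | last =>
      rw [MonoidHom.comp_apply, lift_apply_of, shiftFun, Sum.elim_inl, Fin.lastCases_last,
        map_mul, lift_unshiftFun_uAt]
      simp [unshiftFun]
    | cast t => simp [shiftFun, unshiftFun]
  · simp [shiftFun, unshiftFun]

theorem lift_shiftFun_comp_lift_unshiftFun :
    (lift (shiftFun (k := k) u' a)).comp (lift (unshiftFun u' a)) = .id _ := by
  ext (t | ⟨m, i⟩)
  · induction t using Fin.cases with
    | zero =>
      rw [MonoidHom.comp_apply, lift_apply_of, unshiftFun, Sum.elim_inl, Fin.cases_zero,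
        map_mul, map_inv, lift_shiftFun_uAt]
      simp [shiftFun]
    | succ t => simp [shiftFun, unshiftFun]
  · simp [shiftFun, unshiftFun]

def shift : MulAut (Free k n) :=
  MonoidHom.toMulEquiv _ _ (lift_unshiftFun_comp_lift_shiftFun u' a)
    (lift_shiftFun_comp_lift_unshiftFun u' a)

theorem shift_apply (v : Free k n) : shift u' a v = lift (shiftFun u' a) v := rfl

theorem shift_inv_apply (v : Free k n) : (shift u' a)⁻¹ v = lift (unshiftFun u' a) v := rfl

theorem shift_zpow_inr (d : ℤ) (m : Fin n) (i : ℤ) :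
    (shift u' a ^ d) (of (.inr (m, i))) = (of (.inr (m, i + d)) : Free k n) := by
  induction d using Int.induction_on generalizing i with
  | zero => simp
  | succ d ih =>
    rw [zpow_add_one, MulAut.mul_apply, shift_apply, lift_apply_of, shiftFun, Sum.elim_inr, ih]
    ring_nf
  | pred d ih =>
    rw [zpow_sub_one, MulAut.mul_apply, shift_inv_apply, lift_apply_of, unshiftFun, Sum.elim_inr,
      ih]
    ring_nf

theorem shift_zpow_uAt (d i : ℤ) : (shift u' a ^ d) (uAt (k := k) u' i) = uAt u' (i + d) := by
  change (shift u' a ^ d).toMonoidHom (map _ u') = _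
  rw [apply_map_eq_lift, uAt, map_eq_lift]
  simp [shift_zpow_inr, Function.comp_def]

theorem shift_pow_inl_zero (t : Fin (k + 1)) :
    (shift u' a ^ (t : ℕ)) (of (.inl 0)) = (of (.inl t) : Free k n) := by
  induction t using Fin.induction with
  | zero => simp
  | succ t ih =>
    rw [Fin.val_succ, pow_succ', MulAut.mul_apply, ← Fin.val_castSucc, ih, shift_apply,
      lift_apply_of]
    simp [shiftFun]

def bAt (j : ℤ) : Free k n := (shift u' a ^ (j - a)) (of (.inl 0))

theorem bAt_add_val (t : Fin (k + 1)) : bAt u' a (a + (t : ℕ)) = (of (.inl t) : Free k n) := by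
  rw [bAt, add_sub_cancel_left, zpow_natCast, shift_pow_inl_zero]

theorem bAt_add_succ (j : ℤ) : bAt u' a (j + (k + 1 : ℕ)) = (bAt u' a j * uAt u' j : Free k n) := by
  have hlast := shift_pow_inl_zero (k := k) u' a (Fin.last k)
  rw [Fin.val_last] at hlast
  rw [bAt, bAt, show j + ((k + 1 : ℕ) : ℤ) - a = (j - a) + 1 + (k : ℕ) by push_cast; ring,
    zpow_add, zpow_add, zpow_one, zpow_natCast, MulAut.mul_apply, MulAut.mul_apply, hlast,
    shift_apply, lift_apply_of]
  simp [shiftFun, shift_zpow_uAt]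

theorem shift_zpow_bAt (d j : ℤ) :
    (shift u' a ^ d) (bAt u' a j) = (bAt u' a (j + d) : Free k n) := by
  rw [bAt, bAt, ← MulAut.mul_apply, ← zpow_add]
  ring_nf

def shiftAction : Multiplicative ℤ →* MulAut (Free k n) := zpowersHom _ (shift u' a)⁻¹

variable (k) in
abbrev Model : Type := Free k n ⋊[shiftAction (k := k) u' a] Multiplicative ℤ

def xModel : Model k u' a := .inr (.ofAdd 1)

theorem xModel_zpow (i : ℤ) : xModel (k := k) u' a ^ i = .inr (.ofAdd i) := by
  rw [xModel, ← map_zpow, ← ofAdd_zsmul, smul_eq_mul, mul_one]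

theorem xModel_conj_inl (i : ℤ) (v : Free k n) :
    xModel u' a ^ (-i) * .inl v * xModel u' a ^ i = (.inl ((shift u' a ^ i) v) : Model k u' a) := by
  rw [xModel_zpow, xModel_zpow, show Multiplicative.ofAdd i = (.ofAdd (-i))⁻¹ by simp,
    ← SemidirectProduct.inl_aut, shiftAction, zpowersHom_apply, ofAdd_neg, toAdd_inv, toAdd_ofAdd,
    inv_zpow', neg_neg]

def genModel : Bool ⊕ Fin n → Model k u' a
  | .inl true => xModel u' a
  | .inl false => .inl (bAt u' a 0)
  | .inr m => .inl (of (.inr (m, 0)))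

theorem lift_genModel_relOfH : ∀ ρ ∈ relOfH (k + 1) n u', lift (genModel (k := k) u' a) ρ = 1 := by
  rintro _ rfl
  have hu : lift (genModel (k := k) u' a) (map Sum.inr u') = .inl (uAt u' 0) := by
    rw [uAt, apply_map_eq_lift, apply_map_eq_lift]
    rfl
  simp only [map_mul, map_pow, map_inv, lift_apply_of, hu]
  rw [inv_pow, ← zpow_natCast, ← zpow_neg]
  simp only [genModel]
  rw [← map_inv, xModel_conj_inl, map_inv, shift_zpow_bAt, bAt_add_succ, ← map_mul, ← map_mul,
    mul_assoc, inv_mul_cancel, map_one]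

def toModel : Hgp (k + 1) n u' →* Model k u' a := PresentedGroup.toGroup (lift_genModel_relOfH u' a)

theorem toModel_cj (i : ℤ) {g : Hgp (k + 1) n u'} {v : Free k n} (hg : toModel u' a g = .inl v) :
    toModel u' a (cj (k + 1) n u' i g) = .inl ((shift u' a ^ i) v) := by
  rw [cj, map_mul, map_mul, map_zpow, map_zpow, hg, xg, toModel, PresentedGroup.toGroup.of]
  exact xModel_conj_inl u' a i v

theorem toModel_bi (j : ℤ) : toModel u' a (bi (k + 1) n u' j) = .inl (bAt u' a j) := by
  rw [bi, toModel_cj u' a j (PresentedGroup.toGroup.of _), shift_zpow_bAt, zero_add]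

theorem toModel_yi (m : Fin n) (j : ℤ) :
    toModel u' a (yi (k + 1) n u' m j) = .inl (of (.inr (m, j))) := by
  rw [yi, toModel_cj u' a j (PresentedGroup.toGroup.of _), shift_zpow_inr, zero_add]

variable (k n) in
def embed : FreeGroup (Fin (k + 1) ⊕ Fin n × ℕ) →* Free k n :=
  map (Sum.map id fun p => (p.1, a + p.2))

variable (k n) in
def retract : Free k n →* FreeGroup (Fin (k + 1) ⊕ Fin n × ℕ) :=
  lift (Sum.elim (fun t => of (.inl t))
    fun p => if a ≤ p.2 then of (.inr (p.1, (p.2 - a).toNat)) else 1)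

theorem retract_embed (s : FreeGroup (Fin (k + 1) ⊕ Fin n × ℕ)) :
    retract k n a (embed k n a s) = s := by
  rw [← MonoidHom.comp_apply, show (retract k n a).comp (embed k n a) = .id _ by
    ext (t | ⟨m, i⟩) <;> simp [embed, retract]]
  rfl

theorem retract_U_of_lt {j : ℤ} (hj : j < a) : retract k n a (uAt u' j) = 1 := by
  rw [uAt, apply_map_eq_lift]
  simp only [retract, lift_apply_of, Sum.elim_inr, if_neg hj.not_ge]
  exact (FreeGroup.lift_unique 1 fun _ => rfl).symm

theorem retract_Bf_mem_range (j : ℤ) (hj : j < a + (k + 1 : ℕ)) :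
    retract k n a (bAt u' a j) ∈ (map Sum.inl).range := by
  obtain ⟨d, hd⟩ : ∃ d : ℕ, a - j ≤ d := ⟨(a - j).toNat, Int.self_le_toNat _⟩
  induction d generalizing j with
  | zero =>
    obtain ⟨t, rfl⟩ : ∃ t : Fin (k + 1), j = a + (t : ℕ) :=
      ⟨⟨(j - a).toNat, by omega⟩, by dsimp only; omega⟩
    rw [bAt_add_val]
    exact ⟨of t, by simp [retract]⟩
  | succ d ih =>
    rcases le_or_gt a j with haj | hja
    · exact ih j hj (by omega)
    rw [← mul_inv_cancel_right (bAt u' a j) (uAt u' j), ← bAt_add_succ, map_mul, map_inv,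
      retract_U_of_lt u' a hja, inv_one, mul_one]
    exact ih _ (by omega) (by omega)

theorem Gle_le_comap_toModel {w : ℤ} (hw : w < a) :
    Gle (k + 1) n u' w ≤ ((((map Sum.inl).range.comap (retract k n a)).map
      SemidirectProduct.inl).comap (toModel u' a)) := by
  rw [Gle, Subgroup.closure_le]
  rintro _ (⟨j, hj, rfl⟩ | ⟨m, j, hj, rfl⟩)
  · rw [SetLike.mem_coe, Subgroup.mem_comap, toModel_bi]
    exact Subgroup.mem_map_of_mem _ (retract_Bf_mem_range u' a j (by omega))
  · rw [SetLike.mem_coe, Subgroup.mem_comap, toModel_yi]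
    refine Subgroup.mem_map_of_mem _ ⟨1, ?_⟩
    simp [retract, show ¬a ≤ j by omega]

theorem toModel_coe_eq_inl_embed_repr
    (basis : FreeGroupBasis (Fin (k + 1) ⊕ Fin n × ℕ) (Gge (k + 1) n u' a))
    (hb : ∀ t : Fin (k + 1), (basis (.inl t) : Hgp (k + 1) n u') = bi (k + 1) n u' (a + (t : ℕ)))
    (hy : ∀ m : Fin n, ∀ t : ℕ,
      (basis (.inr (m, t)) : Hgp (k + 1) n u') = yi (k + 1) n u' m (a + t))
    (g : Gge (k + 1) n u' a) :
    toModel u' a g = .inl (embed k n a (basis.repr g)) := by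
  refine DFunLike.congr_fun (basis.ext_hom ((toModel u' a).comp (Gge (k + 1) n u' a).subtype)
    ((SemidirectProduct.inl.comp (embed k n a)).comp basis.repr.toMonoidHom) ?_) g
  rintro (t | ⟨m, t⟩)
  · simp [hb, toModel_bi, bAt_add_val, embed, FreeGroupBasis.repr_apply_coe]
  · simp [hy, toModel_yi, embed, FreeGroupBasis.repr_apply_coe]

end HModel

open HModel

/-- The basis `B⁺(α_r)` is indexed by `Fin k ⊕ Fin n × ℕ`, with `(m, t)` standing for
`y_{m,α_r+t}`. -/
theorem only_b_letters_general (k n : ℕ) (hk : 1 ≤ k)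
    (u' : FreeGroup (Fin n))
    (r : Hgp k n u')
    (a w : ℤ) (ha : IsAlphaLimit k n u' r a) (hw : IsOmegaLimit k n u' r w)
    (hlen : w - a + 1 < 1)
    (basis : FreeGroupBasis (Fin k ⊕ Fin n × ℕ) ↥(Gge k n u' a))
    (hb : ∀ t : Fin k, (basis (Sum.inl t) : Hgp k n u') = bi k n u' (a + (t : ℕ)))
    (hy : ∀ m : Fin n, ∀ t : ℕ,
      (basis (Sum.inr (m, t)) : Hgp k n u') = yi k n u' m (a + t)) :
    ∀ p ∈ (basis.repr ⟨r, ha.1⟩).toWord, ∃ t : Fin k, p.1 = Sum.inl t := by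
  classical
  obtain ⟨k, rfl⟩ := Nat.exists_eq_add_of_le' hk
  set s := basis.repr ⟨r, ha.1⟩
  have hr : toModel u' a r = .inl (embed k n a s) :=
    toModel_coe_eq_inl_embed_repr u' a basis hb hy ⟨r, ha.1⟩
  obtain ⟨v, hv, hrv⟩ := Gle_le_comap_toModel u' a (by omega) hw.1
  obtain ⟨s', hs'⟩ : s ∈ (map Sum.inl).range := by
    rw [← retract_embed a s, ← SemidirectProduct.inl_injective (hrv.trans hr)]
    exact hv
  intro p hp
  rw [← hs', FreeGroup.toWord_map_of_injective Sum.inl_injective] at hp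
  obtain ⟨q, -, rfl⟩ := List.mem_map.mp hp
  exact ⟨q.1, rfl⟩

/-- Lemma 5.1: if `r ∈ N` is non-trivial with `ω_r − α_r + 1 < 1`, then the reduced word
representing `r` in the basis `B⁺(α_r)` of `G_{α_r,∞}` (indexed by `Fin k ⊕ Fin n × ℕ`,
with `(m, t)` standing for `y_{m,α_r+t}`) contains only `b`-letters and no `y`-letters. -/
theorem only_b_letters (k n : ℕ) (hk : 1 ≤ k) (hn : 1 ≤ n)
    (u' : FreeGroup (Fin n)) (hu : u' ≠ 1)
    (φ : Hgp k n u' →* Multiplicative ℤ) (hφ : IsExpSum k n u' φ)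
    (r : Hgp k n u') (hr : r ∈ φ.ker) (hr1 : r ≠ 1)
    (a w : ℤ) (ha : IsAlphaLimit k n u' r a) (hw : IsOmegaLimit k n u' r w)
    (hlen : w - a + 1 < 1)
    (basis : FreeGroupBasis (Fin k ⊕ Fin n × ℕ) ↥(Gge k n u' a))
    (hb : ∀ t : Fin k, (basis (Sum.inl t) : Hgp k n u') = bi k n u' (a + (t : ℕ)))
    (hy : ∀ m : Fin n, ∀ t : ℕ,
      (basis (Sum.inr (m, t)) : Hgp k n u') = yi k n u' m (a + t)) :
    ∀ p ∈ (basis.repr ⟨r, ha.1⟩).toWord, ∃ t : Fin k, p.1 = Sum.inl t :=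
  only_b_letters_general k n hk u' r a w ha hw hlen basis hb hy
end

section
/- For a non-trivial element r ∈ N, the following are equivalent: (1) for some i ∈ ℤ, the reduced word r(i) representing r in the free basis B(i) begins with a positive power of a b-letter; (2) for all i ∈ ℤ, the word r(i) begins with a positive power of a b-letter. -/
namespace FreeGroup

theorem toWord_mk_singleton_mul {α : Type*} [DecidableEq α] {z : α × Bool} {g : FreeGroup α}
    (h : ∀ x ∈ g.toWord.head?, z.1 = x.1 → z.2 = x.2) :
    (mk [z] * g).toWord = z :: g.toWord := by
  rw [toWord_mul, toWord_mk, IsReduced.singleton.reduce_eq, List.singleton_append]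
  refine IsReduced.reduce_eq ?_
  rcases hg : g.toWord with _ | ⟨x, L⟩
  · exact .singleton
  · rw [hg] at h
    rw [isReduced_cons_cons, ← hg]
    exact ⟨h x rfl, isReduced_toWord⟩

section Shear

variable {κ υ : Type*}

theorem mk_mem_range_map_inr {L : List ((κ ⊕ υ) × Bool)} (hL : ∀ x ∈ L, x.1.isRight) :
    mk L ∈ (map (Sum.inr : υ → κ ⊕ υ)).range := by
  induction L with
  | nil => exact ⟨1, by simp [one_eq_mk]⟩
  | cons x L ih =>
    obtain ⟨a | y, e⟩ := x
    · simpa using hL _ List.mem_cons_self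
    · have hcons : mk ((Sum.inr y, e) :: L) = map Sum.inr (mk [(y, e)]) * mk L := by
        rw [map.mk, mul_mk]; rfl
      rw [hcons]
      exact mul_mem ⟨_, rfl⟩ (ih fun x hx => hL x (List.mem_cons_of_mem _ hx))

theorem isRight_or_eq_append_inl (L : List ((κ ⊕ υ) × Bool)) :
    (∀ x ∈ L, x.1.isRight) ∨
      ∃ p t e D, L = p ++ (Sum.inl t, e) :: D ∧ ∀ x ∈ p, x.1.isRight := by
  induction L with
  | nil => simp
  | cons x L ih =>
    obtain ⟨s | y, f⟩ := x
    · exact .inr ⟨[], s, f, L, rfl, by simp⟩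
    · rcases ih with hL | ⟨p, t, e, D, rfl, hp⟩
      · exact .inl (by simpa using hL)
      · exact .inr ⟨(Sum.inr y, f) :: p, t, e, D, rfl, by simpa using hp⟩

variable (π : κ → κ) (c : κ → FreeGroup υ)

def shear : FreeGroup (κ ⊕ υ) →* FreeGroup (κ ⊕ υ) :=
  lift (Sum.elim (fun t => of (Sum.inl (π t)) * map Sum.inr (c t)) (fun y => of (Sum.inr y)))

/-- The `y`-word that `shear` puts in front of the image `b_{π t}^e` of `b_t^e`. -/
def shearLead (t : κ) : Bool → FreeGroup (κ ⊕ υ)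
  | true => 1
  | false => (map Sum.inr (c t))⁻¹

theorem shearLead_mem_range (t : κ) (e : Bool) :
    shearLead c t e ∈ (map (Sum.inr : υ → κ ⊕ υ)).range := by
  cases e
  · exact inv_mem ⟨c t, rfl⟩
  · exact one_mem _

@[simp]
theorem shear_of_inl (t : κ) :
    shear π c (of (Sum.inl t)) = of (Sum.inl (π t)) * map Sum.inr (c t) :=
  lift_apply_of

@[simp]
theorem shear_of_inr (y : υ) : shear π c (of (Sum.inr y)) = of (Sum.inr y) :=
  lift_apply_of

@[simp]
theorem shear_map_inr (v : FreeGroup υ) : shear π c (map Sum.inr v) = map Sum.inr v := by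
  have : (shear π c).comp (map Sum.inr) = map Sum.inr := by ext; simp
  exact DFunLike.congr_fun this v

theorem shear_mk_inl (t : κ) (e : Bool) :
    shear π c (mk [(Sum.inl t, e)]) =
      shearLead c t e * mk [(Sum.inl (π t), e)] * (shearLead c t !e)⁻¹ := by
  have hof (a : κ ⊕ υ) : mk [(a, true)] = of a := rfl
  have hinv (a : κ ⊕ υ) : mk [(a, false)] = (of a)⁻¹ := by rw [← hof, inv_mk]; rfl
  cases e <;> simp [shearLead, hof, hinv]

theorem shear_symm_shear (π : κ ≃ κ) (w : FreeGroup (κ ⊕ υ)) :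
    shear π.symm (fun s => (c (π.symm s))⁻¹) (shear π c w) = w := by
  have : (shear π.symm (fun s => (c (π.symm s))⁻¹)).comp (shear π c) = MonoidHom.id _ := by
    ext (t | y) <;> simp
  exact DFunLike.congr_fun this w

variable [DecidableEq κ] [DecidableEq υ]

theorem isRight_of_mem_toWord {g : FreeGroup (κ ⊕ υ)}
    (hg : g ∈ (map (Sum.inr : υ → κ ⊕ υ)).range) {x : (κ ⊕ υ) × Bool} (hx : x ∈ g.toWord) :
    x.1.isRight := by
  obtain ⟨v, rfl⟩ := hg
  rw [← mk_toWord (x := v), map.mk, toWord_mk] at hx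
  obtain ⟨y, -, rfl⟩ := List.mem_map.1 (reduce.red.sublist.mem hx)
  rfl

theorem toWord_mul_eq_append {y v w : FreeGroup (κ ⊕ υ)}
    (hy : y ∈ (map (Sum.inr : υ → κ ⊕ υ)).range) (hv : v ∈ (map (Sum.inr : υ → κ ⊕ υ)).range)
    {s : κ} {e : Bool} {W : List ((κ ⊕ υ) × Bool)}
    (hw : w.toWord = v.toWord ++ (Sum.inl s, e) :: W) :
    (y * w).toWord = (y * v).toWord ++ (Sum.inl s, e) :: W := by
  have hsuffix : IsReduced ((Sum.inl s, e) :: W) :=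
    (hw ▸ isReduced_toWord (x := w)).infix (List.suffix_append _ _).isInfix
  have hjoin : IsReduced ((y * v).toWord ++ [(Sum.inl s, e)]) := by
    refine List.isChain_append.2 ⟨isReduced_toWord, IsReduced.singleton, ?_⟩
    rintro x hx _ ⟨⟩ hxs
    have := isRight_of_mem_toWord (mul_mem hy hv) (List.mem_of_mem_getLast? hx)
    simp [hxs] at this
  have hw' : w = v * mk ((Sum.inl s, e) :: W) := by
    rw [← mk_toWord (x := w), hw, ← mul_mk, mk_toWord]
  rw [hw', ← mul_assoc, toWord_mul, toWord_mk, hsuffix.reduce_eq, IsReduced.reduce_eq]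
  simpa using hjoin.append_overlap (L₃ := W) (by simpa using hsuffix) (by simp)

variable {π c} in
/-- The images of two `b`-letters of a reduced word that are separated only by `y`-letters do
not cancel: for opposite signs `hV` makes a conjugate of `mk p'` trivial, so the two letters were
already adjacent in the reduced word. -/
theorem eq_of_shearLead_conj_eq_one (hπ : Function.Injective π)
    {p p' D' : List ((κ ⊕ υ) × Bool)} {t t' : κ} {e e' : Bool}
    (hred : IsReduced (p ++ (Sum.inl t, e) :: (p' ++ (Sum.inl t', e') :: D')))
    (hV : (shearLead c t !e)⁻¹ * (mk p' * shearLead c t' e') = 1) (htt' : π t = π t') :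
    e = e' := by
  obtain rfl := hπ htt'
  by_contra hne
  obtain rfl : e' = !e := by cases e <;> cases e' <;> simp at hne ⊢
  have hp'red : IsReduced p' :=
    ((hred.infix (List.suffix_append _ _).isInfix).infix (List.suffix_cons _ _).isInfix).infix
      (List.prefix_append _ _).isInfix
  have hp'nil : p' = [] := by
    rw [← hp'red.reduce_eq, ← toWord_mk, mul_eq_right.1 (inv_mul_eq_one.1 hV).symm, toWord_one]
  subst hp'nil
  have := hred.infix (L₁ := [(Sum.inl t, e), (Sum.inl t, !e)]) ⟨p, D', by simp⟩
  simp at this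

theorem toWord_shear (hπ : Function.Injective π) (g : FreeGroup (κ ⊕ υ))
    (p : List ((κ ⊕ υ) × Bool)) (t : κ) (e : Bool) (D : List ((κ ⊕ υ) × Bool))
    (hg : g.toWord = p ++ (Sum.inl t, e) :: D) (hp : ∀ x ∈ p, x.1.isRight) :
    ∃ M, (shear π c g).toWord = (mk p * shearLead c t e).toWord ++ (Sum.inl (π t), e) :: M := by
  induction hn : D.length using Nat.strong_induction_on generalizing g p t e D with
  | _ n ih =>
  have hred : IsReduced (p ++ (Sum.inl t, e) :: D) := hg ▸ isReduced_toWord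
  have hD : (mk D).toWord = D :=
    toWord_mk.trans (hred.infix (List.suffix_append _ _).isInfix |>.infix
      (List.suffix_cons _ _).isInfix).reduce_eq
  obtain ⟨q, hq⟩ := mk_mem_range_map_inr hp
  set Z := (shearLead c t !e)⁻¹ * shear π c (mk D) with hZdef
  have hσg : shear π c g = (mk p * shearLead c t e) * (mk [(Sum.inl (π t), e)] * Z) := by
    rw [← mk_toWord (x := g), hg, ← List.singleton_append, ← mul_mk, ← mul_mk, _root_.map_mul,
      _root_.map_mul, shear_mk_inl, ← hq, shear_map_inr]
    simp only [hZdef, mul_assoc]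
  have hZ : ∀ x ∈ Z.toWord.head?, (Sum.inl (π t) : κ ⊕ υ) = x.1 → e = x.2 := by
    rcases isRight_or_eq_append_inl D with hDY | ⟨p', t', e', D', rfl, hp'⟩
    · have hZY : Z ∈ (map (Sum.inr : υ → κ ⊕ υ)).range := by
        obtain ⟨u, hu⟩ := mk_mem_range_map_inr hDY
        rw [hZdef, ← hu, shear_map_inr]
        exact mul_mem (inv_mem (shearLead_mem_range c t _)) ⟨u, rfl⟩
      intro x hx hx1
      have := isRight_of_mem_toWord hZY (List.mem_of_mem_head? hx)
      simp [← hx1] at this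
    · obtain ⟨M', hM'⟩ := ih D'.length (by simp [← hn]; omega) _ p' t' e' D' hD hp' rfl
      have hlead := inv_mem (shearLead_mem_range c t !e)
      have hV := mul_mem (mk_mem_range_map_inr hp') (shearLead_mem_range c t' e')
      rw [hZdef, toWord_mul_eq_append hlead hV hM']
      rcases hVw : ((shearLead c t !e)⁻¹ * (mk p' * shearLead c t' e')).toWord with _ | ⟨a, A⟩
      · rintro x ⟨⟩ hx1
        exact eq_of_shearLead_conj_eq_one hπ hred (toWord_eq_nil_iff.1 hVw)
          (Sum.inl_injective hx1)
      · rintro x ⟨⟩ hx1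
        have := isRight_of_mem_toWord (mul_mem hlead hV) (hVw ▸ List.mem_cons_self)
        simp [← hx1] at this
  refine ⟨Z.toWord, ?_⟩
  rw [hσg, toWord_mul_eq_append (v := 1) (mul_mem ⟨q, hq⟩ (shearLead_mem_range c t e))
    (one_mem _), mul_one]
  rw [toWord_mk_singleton_mul hZ, toWord_one, List.nil_append]

def StartsWithPosInl (w : FreeGroup (κ ⊕ υ)) : Prop :=
  ∃ t, w.toWord.head? = some (Sum.inl t, true)

theorem StartsWithPosInl.shear (hπ : Function.Injective π) {w : FreeGroup (κ ⊕ υ)}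
    (h : StartsWithPosInl w) : StartsWithPosInl (shear π c w) := by
  obtain ⟨t, ht⟩ := h
  obtain ⟨M, hM⟩ := toWord_shear π c hπ w [] t true w.toWord.tail
    (List.eq_cons_of_mem_head? ht) (by simp)
  exact ⟨π t, by simp [hM, shearLead]⟩

theorem startsWithPosInl_shear_iff (π : κ ≃ κ) {w : FreeGroup (κ ⊕ υ)} :
    StartsWithPosInl (shear π c w) ↔ StartsWithPosInl w :=
  ⟨fun h => shear_symm_shear c π w ▸ h.shear _ _ π.symm.injective,
    fun h => h.shear π c π.injective⟩

end Shear

end FreeGroup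

theorem Int.iff_zero_of_forall_add_one_iff {P : ℤ → Prop} (h : ∀ j, P (j + 1) ↔ P j) (i : ℤ) :
    P i ↔ P 0 := by
  induction i using Int.induction_on with
  | zero => rfl
  | succ _ ih => rw [h, ih]
  | pred _ ih => rw [← ih, ← h, sub_add_cancel]

section Presentation

variable {k n : ℕ} {u' : FreeGroup (Fin n)}

theorem bi_add (i : ℤ) : bi k n u' (i + k) = bi k n u' i * ui k n u' i := by
  have hu : (PresentedGroup.mk (relOfH k n u')).comp (FreeGroup.map Sum.inr) =
      FreeGroup.lift (yg k n u') := by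
    ext m; rfl
  have hrel : (xg k n u')⁻¹ ^ k * (bg k n u')⁻¹ * xg k n u' ^ k * bg k n u' *
      FreeGroup.lift (yg k n u') u' = 1 := by
    have h := PresentedGroup.one_of_mem (rels := relOfH k n u') rfl
    simp only [map_mul, map_pow, map_inv, ← MonoidHom.comp_apply, hu] at h
    exact h
  rw [bi, bi, ui, cj, cj, cj, eq_inv_of_mul_eq_one_right hrel]
  group

theorem ui_eq_lift (i : ℤ) : ui k n u' i = FreeGroup.lift (fun m => yi k n u' m i) u' := by
  have : (MulAut.conj (xg k n u' ^ (-i))).toMonoidHom.comp (FreeGroup.lift (yg k n u')) =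
      FreeGroup.lift fun m => yi k n u' m i := by
    ext m
    simp only [MonoidHom.comp_apply, MulEquiv.coe_toMonoidHom, MulAut.conj_apply,
      FreeGroup.lift_apply_of, yi, cj, zpow_neg, inv_inv]
  have h := DFunLike.congr_fun this u'
  simp only [MonoidHom.comp_apply, MulEquiv.coe_toMonoidHom, MulAut.conj_apply, zpow_neg,
    inv_inv] at h
  simpa only [ui, cj, zpow_neg] using h

theorem coe_repr_symm_map_eq_ui {φ : Hgp k n u' →* Multiplicative ℤ}
    {basis : ℤ → FreeGroupBasis (Fin k ⊕ Fin n × ℤ) φ.ker} (hy : ∀ i : ℤ, ∀ m : Fin n, ∀ j : ℤ,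
      ((basis i) (Sum.inr (m, j)) : Hgp k n u') = yi k n u' m j) (l j : ℤ) :
    (((basis l).repr.symm (FreeGroup.map Sum.inr (FreeGroup.map (·, j) u')) : φ.ker) :
      Hgp k n u') = ui k n u' j := by
  have : φ.ker.subtype.comp ((basis l).repr.symm.toMonoidHom.comp
      ((FreeGroup.map Sum.inr).comp (FreeGroup.map (·, j)))) =
      FreeGroup.lift fun m => yi k n u' m j := by
    ext m
    simp only [MonoidHom.comp_apply, FreeGroup.map.of, FreeGroup.lift_apply_of]
    exact hy l m j
  rw [ui_eq_lift, ← this]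
  rfl

theorem coe_basis_add_one_inl {φ : Hgp (k + 1) n u' →* Multiplicative ℤ}
    {basis : ℤ → FreeGroupBasis (Fin (k + 1) ⊕ Fin n × ℤ) φ.ker}
    (hb : ∀ i : ℤ, ∀ t : Fin (k + 1),
      ((basis i) (Sum.inl t) : Hgp (k + 1) n u') = bi (k + 1) n u' (i + (t : ℕ)))
    (hy : ∀ i : ℤ, ∀ m : Fin n, ∀ j : ℤ,
      ((basis i) (Sum.inr (m, j)) : Hgp (k + 1) n u') = yi (k + 1) n u' m j)
    (j : ℤ) (t : Fin (k + 1)) :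
    ((basis (j + 1)) (Sum.inl t) : Hgp (k + 1) n u') = basis j (Sum.inl (t + 1)) *
      (basis j).repr.symm
        (FreeGroup.map Sum.inr ((Pi.mulSingle (Fin.last k) (FreeGroup.map (·, j) u') :
          Fin (k + 1) → FreeGroup (Fin n × ℤ)) t)) := by
  rw [hb, hb]
  by_cases ht : t = Fin.last k
  · subst ht
    rw [Pi.mulSingle_eq_same, coe_repr_symm_map_eq_ui hy, Fin.last_add_one, Fin.val_zero,
      Fin.val_last, show j + 1 + (k : ℤ) = j + ((k + 1 : ℕ) : ℤ) by push_cast; ring, bi_add,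
      Nat.cast_zero, add_zero]
  · rw [Pi.mulSingle_eq_of_ne ht, map_one, map_one, OneMemClass.coe_one, mul_one,
      Fin.val_add_one_of_lt (Fin.lt_last_iff_ne_last.2 ht)]
    congr 1
    push_cast
    ring

theorem repr_eq_shear {φ : Hgp (k + 1) n u' →* Multiplicative ℤ}
    {basis : ℤ → FreeGroupBasis (Fin (k + 1) ⊕ Fin n × ℤ) φ.ker}
    (hb : ∀ i : ℤ, ∀ t : Fin (k + 1),
      ((basis i) (Sum.inl t) : Hgp (k + 1) n u') = bi (k + 1) n u' (i + (t : ℕ)))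
    (hy : ∀ i : ℤ, ∀ m : Fin n, ∀ j : ℤ,
      ((basis i) (Sum.inr (m, j)) : Hgp (k + 1) n u') = yi (k + 1) n u' m j)
    (j : ℤ) (w : φ.ker) :
    (basis j).repr w = FreeGroup.shear (finRotate (k + 1))
      (Pi.mulSingle (Fin.last k) (FreeGroup.map (·, j) u')) ((basis (j + 1)).repr w) := by
  have hcomp : (basis j).repr.symm.toMonoidHom.comp (FreeGroup.shear (finRotate (k + 1))
      (Pi.mulSingle (Fin.last k) (FreeGroup.map (·, j) u'))) =
      (basis (j + 1)).repr.symm.toMonoidHom := by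
    ext (t | ⟨m, l⟩)
    · simp only [MonoidHom.comp_apply, FreeGroup.shear_of_inl, finRotate_apply,
        MulEquiv.coe_toMonoidHom, map_mul, Subgroup.coe_mul]
      exact (coe_basis_add_one_inl hb hy j t).symm
    · exact (hy j m l).trans (hy (j + 1) m l).symm
  have h := DFunLike.congr_fun hcomp ((basis (j + 1)).repr w)
  simp only [MonoidHom.comp_apply, MulEquiv.coe_toMonoidHom, MulEquiv.symm_apply_apply] at h
  exact ((MulEquiv.symm_apply_eq _).1 h).symm

end Presentation

theorem begins_with_b_letter_iff_general (k n : ℕ) (hk : 1 ≤ k)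
    (u' : FreeGroup (Fin n))
    (φ : Hgp k n u' →* Multiplicative ℤ)
    (basis : ∀ i : ℤ, FreeGroupBasis (Fin k ⊕ Fin n × ℤ) ↥φ.ker)
    (hb : ∀ i : ℤ, ∀ t : Fin k,
      ((basis i) (Sum.inl t) : Hgp k n u') = bi k n u' (i + (t : ℕ)))
    (hy : ∀ i : ℤ, ∀ m : Fin n, ∀ j : ℤ,
      ((basis i) (Sum.inr (m, j)) : Hgp k n u') = yi k n u' m j)
    (r : Hgp k n u') (hr : r ∈ φ.ker) :
    (∃ i : ℤ, ∃ t : Fin k,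
        ((basis i).repr ⟨r, hr⟩).toWord.head? = some (Sum.inl t, true)) ↔
    (∀ i : ℤ, ∃ t : Fin k,
        ((basis i).repr ⟨r, hr⟩).toWord.head? = some (Sum.inl t, true)) := by
  obtain ⟨k, rfl⟩ := Nat.exists_eq_add_of_le' hk
  have step (j : ℤ) : FreeGroup.StartsWithPosInl ((basis (j + 1)).repr ⟨r, hr⟩) ↔
      FreeGroup.StartsWithPosInl ((basis j).repr ⟨r, hr⟩) := by
    rw [repr_eq_shear hb hy j, FreeGroup.startsWithPosInl_shear_iff]
  have h := Int.iff_zero_of_forall_add_one_iff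
    (P := fun j => FreeGroup.StartsWithPosInl ((basis j).repr ⟨r, hr⟩)) step
  exact ⟨fun ⟨i, hi⟩ j => (h j).2 ((h i).1 hi), fun hall => ⟨0, hall 0⟩⟩

/-- Lemma 3.3: for non-trivial `r ∈ N` and the family of bases `B(i)` of `N`
(indexed by `Fin k ⊕ Fin n × ℤ`, with `Sum.inl t ↦ b_{i+t}` and `(m, j) ↦ y_{m,j}`), the word
representing `r` in `B(i)` begins with a positive power of a `b`-letter for some `i` if and
only if it does so for all `i`. -/
theorem begins_with_b_letter_iff (k n : ℕ) (hk : 1 ≤ k) (hn : 1 ≤ n)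
    (u' : FreeGroup (Fin n)) (hu : u' ≠ 1)
    (φ : Hgp k n u' →* Multiplicative ℤ) (hφ : IsExpSum k n u' φ)
    (basis : ∀ i : ℤ, FreeGroupBasis (Fin k ⊕ Fin n × ℤ) ↥φ.ker)
    (hb : ∀ i : ℤ, ∀ t : Fin k,
      ((basis i) (Sum.inl t) : Hgp k n u') = bi k n u' (i + (t : ℕ)))
    (hy : ∀ i : ℤ, ∀ m : Fin n, ∀ j : ℤ,
      ((basis i) (Sum.inr (m, j)) : Hgp k n u') = yi k n u' m j)
    (r : Hgp k n u') (hr : r ∈ φ.ker) (hr1 : r ≠ 1) :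
    (∃ i : ℤ, ∃ t : Fin k,
        ((basis i).repr ⟨r, hr⟩).toWord.head? = some (Sum.inl t, true)) ↔
    (∀ i : ℤ, ∃ t : Fin k,
        ((basis i).repr ⟨r, hr⟩).toWord.head? = some (Sum.inl t, true)) :=
  begins_with_b_letter_iff_general k n hk u' φ basis hb hy r hr
end
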